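/- arXiv:cs/0611162 — 10 statements merged into one kernel-verified Lean document; each statement's English description precedes it below -/
import Mathlib

section
/- Let m be a positive natural number and let f : (Fin m → ZMod 2) → ZMod 4 be bent. Then for every u : Fin m → ZMod 2 there exists k : Fin 4 such that f̂(u) = (1 + Complex.I)^m * Complex.I ^ (k : ℕ). (Equivalently, every value of the Fourier spectrum of f has the form 2^{m/2}·ω^m·i^k with ω = (1+i)/√2 and k ∈ Z_4.) -/
/-- The Fourier transform of a `ZMod 4`-valued generalized Boolean function. -/
noncomputable def fourier4 {m : ℕ} (f : (Fin m → ZMod 2) → ZMod 4) (u : Fin m → ZMod 2) : ℂ :=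
  ∑ x : Fin m → ZMod 2, Complex.I ^ (f x).val * (-1 : ℂ) ^ (∑ j, u j * x j).val

/-- A Gaussian integer of norm `2^m` is `(1+i)^m` times a power of `i`. -/
lemma key_gaussian_pow : ∀ (m : ℕ) (z : GaussianInt), z.norm = 2 ^ m →
    ∃ k : Fin 4, z = (1 + ⟨0,1⟩) ^ m * (⟨0,1⟩ : GaussianInt) ^ (k : ℕ) := by
  intro m
  induction m with
  | zero =>
    rintro ⟨a, b⟩ h
    simp [Zsqrtd.norm] at h
    have ha1 : a ≤ 1 := by nlinarith
    have ha2 : -1 ≤ a := by nlinarith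
    have hb1 : b ≤ 1 := by nlinarith
    have hb2 : -1 ≤ b := by nlinarith
    interval_cases a <;> interval_cases b <;> first
      | omega
      | (refine ⟨⟨0, by norm_num⟩, ?_⟩; norm_num [Fin.val_mk, Zsqrtd.ext_iff, Zsqrtd.re_mul, Zsqrtd.im_mul, pow_succ]; done)
      | (refine ⟨⟨1, by norm_num⟩, ?_⟩; norm_num [Fin.val_mk, Zsqrtd.ext_iff, Zsqrtd.re_mul, Zsqrtd.im_mul, pow_succ]; done)
      | (refine ⟨⟨2, by norm_num⟩, ?_⟩; norm_num [Fin.val_mk, Zsqrtd.ext_iff, Zsqrtd.re_mul, Zsqrtd.im_mul, pow_succ]; done)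
      | (refine ⟨⟨3, by norm_num⟩, ?_⟩; norm_num [Fin.val_mk, Zsqrtd.ext_iff, Zsqrtd.re_mul, Zsqrtd.im_mul, pow_succ]; done)
  | succ m ih =>
    rintro ⟨a, b⟩ h
    simp [Zsqrtd.norm] at h
    have h2 : (2:ℤ) ^ (m+1) = 2 * 2 ^ m := by ring
    have hev : ∃ p q : ℤ, a = p - q ∧ b = p + q := by
      rcases Int.even_or_odd a with ⟨p, hp⟩ | ⟨p, hp⟩ <;>
        rcases Int.even_or_odd b with ⟨q, hq⟩ | ⟨q, hq⟩
      · exact ⟨p + q, q - p, by omega, by omega⟩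
      · exfalso
        have hodd : a * a + b * b = 2*(2*p*p + 2*q*q + 2*q) + 1 := by subst hp hq; ring
        omega
      · exfalso
        have hodd : a * a + b * b = 2*(2*p*p + 2*p + 2*q*q) + 1 := by subst hp hq; ring
        omega
      · exact ⟨p + q + 1, q - p, by omega, by omega⟩
    obtain ⟨p, q, rfl, rfl⟩ := hev
    have hn : (⟨p, q⟩ : GaussianInt).norm = 2 ^ m := by
      simp [Zsqrtd.norm]; nlinarith
    obtain ⟨k, hk⟩ := ih ⟨p, q⟩ hn
    refine ⟨k, ?_⟩
    rw [pow_succ]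
    have : (⟨p - q, p + q⟩ : GaussianInt) = (1 + ⟨0,1⟩) * ⟨p, q⟩ := by
      simp [Zsqrtd.ext_iff, Zsqrtd.re_mul, Zsqrtd.im_mul, Zsqrtd.re_add, Zsqrtd.im_add]
      constructor <;> ring
    rw [this, hk]; ring

/-- Every value in the Fourier spectrum of a `ZMod 4`-valued bent function has the form
`(1 + i)^m · i^k = 2^{m/2} · ω^m · i^k` with `ω = (1+i)/√2` and `k ∈ ZMod 4`. -/
theorem stmt1 (m : ℕ) (hm : 1 ≤ m) (f : (Fin m → ZMod 2) → ZMod 4)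
    (hf : ∀ u, Complex.normSq (fourier4 f u) = 2 ^ m) (u : Fin m → ZMod 2) :
    ∃ k : Fin 4, fourier4 f u = (1 + Complex.I) ^ m * Complex.I ^ (k : ℕ) := by
  set g : GaussianInt :=
    ∑ x : Fin m → ZMod 2, (⟨0,1⟩ : GaussianInt) ^ (f x).val * (-1) ^ (∑ j, u j * x j).val with hg
  have hI : ((⟨0,1⟩ : GaussianInt) : ℂ) = Complex.I := by
    simp [GaussianInt.toComplex_def]
  have hcoe : (g : ℂ) = fourier4 f u := by
    rw [hg, fourier4]
    push_cast [map_sum, map_mul, map_pow, map_neg, map_one, hI]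
    rfl
  have hnorm : g.norm = 2 ^ m := by
    have := hf u
    rw [← hcoe, ← GaussianInt.intCast_real_norm] at this
    exact_mod_cast this
  obtain ⟨k, hk⟩ := key_gaussian_pow m g hnorm
  refine ⟨k, ?_⟩
  rw [← hcoe, hk]
  push_cast [map_mul, map_pow, map_add, map_one, hI]
  ring
end

section
/- Let m > 2, let f : (Fin m → ZMod 2) → ZMod 4 be bent, and let a, b : (Fin m → ZMod 2) → ZMod 2 satisfy f(x) = ((a x).val : ZMod 4) + 2 * ((b x).val : ZMod 4) for all x (the 2-adic expansion of f). Then both a and b have algebraic degree at most ⌈m/2⌉ = (m+1)/2; that is, for every S : Finset (Fin m) with S.card > (m+1)/2, the algebraic-normal-form coefficient of a at S vanishes, i.e. ∑ over all x : Fin m → ZMod 2 with support contained in S (meaning x j = 1 → j ∈ S) of a(x) equals 0 in ZMod 2, and likewise for b. -/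
/-!
Since `i ^ α = ((1 + i) + (1 - i) (-1) ^ α) / 2` for `α ∈ {0, 1}`, the expansion `f = a + 2b` gives
`2 f̂ = (1 + i) W_b + (1 - i) W_{a+b}` in terms of the Walsh transforms, and bentness becomes
`W_b(u)² + W_{a+b}(u)² = 2 ^ (m + 1)`. Solving this sum of two squares, every Walsh value of
`g ∈ {b, a + b}` is divisible by `2 ^ ⌈m/2⌉`, and for even `m` is `2 ^ (m/2)` times an odd number.
Summing `W_g` over the vectors supported off `S` gives `2 ^ (m - |S|) ∑_{x ⊆ S} (-1) ^ g(x)`, so for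
`|S| > ⌈m/2⌉` the latter sum is divisible by `4`. It equals `2 ^ |S| - 2 #{x ⊆ S | g(x) = 1}`,
so the ANF coefficient of `g` at `S` vanishes; finally `a = b + (a + b)`.
-/

open Finset Complex

def sign2 (z : ZMod 2) : ℤ := (-1) ^ z.val

lemma sign2_add (z w : ZMod 2) : sign2 (z + w) = sign2 z * sign2 w := by
  revert z w; decide

lemma sign2_eq_one_sub_two_mul_val (z : ZMod 2) : sign2 z = 1 - 2 * z.val := by
  revert z; decide

lemma sign2_sum {ι : Type*} (s : Finset ι) (f : ι → ZMod 2) :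
    sign2 (∑ i ∈ s, f i) = ∏ i ∈ s, sign2 (f i) := by
  classical
  induction s using Finset.induction_on with
  | empty => rfl
  | insert i s hi ih => rw [sum_insert hi, prod_insert hi, sign2_add, ih]

lemma sum_sign2_mul (y : ZMod 2) : ∑ z : ZMod 2, sign2 (z * y) = if y = 0 then 2 else 0 := by
  revert y; decide

lemma val_natCast_add_two_mul (α β : ZMod 2) :
    ((α.val : ZMod 4) + 2 * (β.val : ZMod 4)).val = α.val + 2 * β.val := by
  revert α β; decide

lemma two_mul_I_pow_val (α : ZMod 2) : 2 * I ^ α.val = (1 + I) + (1 - I) * sign2 α := by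
  obtain rfl | rfl : α = 0 ∨ α = 1 := by revert α; decide
  all_goals simp only [sign2, ZMod.val_zero, ZMod.val_one, pow_zero, pow_one]; push_cast; ring

lemma two_mul_I_pow_mul_neg_one_pow (α β d : ZMod 2) :
    2 * (I ^ ((α.val : ZMod 4) + 2 * (β.val : ZMod 4)).val * (-1) ^ d.val)
      = (1 + I) * sign2 (β + d) + (1 - I) * sign2 (α + β + d) := by
  have neg_one_pow : ∀ z : ZMod 2, ((-1) ^ z.val : ℂ) = sign2 z := fun z => by simp [sign2]
  rw [val_natCast_add_two_mul, pow_add, pow_mul, I_sq, add_assoc, sign2_add α, sign2_add,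
    neg_one_pow, neg_one_pow, ← mul_assoc, ← mul_assoc, two_mul_I_pow_val]
  push_cast
  ring

lemma normSq_one_add_I_mul_add_one_sub_I_mul (B C : ℝ) :
    normSq ((1 + I) * B + (1 - I) * C) = 2 * (B ^ 2 + C ^ 2) := by
  simp only [normSq_apply, add_re, add_im, mul_re, mul_im, sub_re, sub_im, one_re, one_im, I_re,
    I_im, ofReal_re, ofReal_im]
  ring

lemma exists_halves_of_sq_add_sq_eq_two_pow {B C : ℤ} {n : ℕ} (h : B ^ 2 + C ^ 2 = 2 ^ (n + 2)) :
    ∃ B' C', B = 2 * B' ∧ C = 2 * C' ∧ B' ^ 2 + C' ^ 2 = 2 ^ n := by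
  have h4 : (B ^ 2 + C ^ 2) % 4 = 0 := by rw [h, pow_add]; simp
  rcases Int.even_or_odd' B with ⟨k, rfl | rfl⟩ <;> rcases Int.even_or_odd' C with ⟨l, rfl | rfl⟩
  · exact ⟨k, l, rfl, rfl, by rw [pow_add] at h; linarith⟩
  all_goals ring_nf at h4; omega

lemma two_pow_dvd_of_sq_add_sq_eq_two_pow_even {B C : ℤ} (t : ℕ)
    (h : B ^ 2 + C ^ 2 = 2 ^ (2 * t)) : 2 ^ t ∣ B := by
  induction t generalizing B C with
  | zero => exact one_dvd B
  | succ t ih =>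
    obtain ⟨B', C', rfl, -, h'⟩ := exists_halves_of_sq_add_sq_eq_two_pow (n := 2 * t) h
    rw [pow_succ']
    exact mul_dvd_mul_left 2 (ih h')

lemma modEq_two_pow_of_sq_add_sq_eq_two_pow_odd {B C : ℤ} (t : ℕ)
    (h : B ^ 2 + C ^ 2 = 2 ^ (2 * t + 1)) : B ≡ 2 ^ t [ZMOD 2 ^ (t + 1)] := by
  induction t generalizing B C with
  | zero =>
    rcases Int.even_or_odd' B with ⟨k, rfl | rfl⟩ <;> rcases Int.even_or_odd' C with ⟨l, rfl | rfl⟩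
    all_goals ring_nf at h; simp only [Int.ModEq]; omega
  | succ t ih =>
    obtain ⟨B', C', rfl, -, h'⟩ := exists_halves_of_sq_add_sq_eq_two_pow (n := 2 * t + 1) h
    rw [pow_succ' _ t, pow_succ' _ (t + 1)]
    exact (ih h').mul_left'

lemma two_pow_succ_dvd_sum_of_modEq {ι : Type*} {s : Finset ι} (hs : Even s.card) {w : ι → ℤ}
    (t : ℕ) (hw : ∀ i ∈ s, w i ≡ 2 ^ t [ZMOD 2 ^ (t + 1)]) : 2 ^ (t + 1) ∣ ∑ i ∈ s, w i := by
  obtain ⟨r, hr⟩ := hs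
  refine (Int.ModEq.sum hw).dvd_iff.2 ⟨r, ?_⟩
  rw [sum_const, hr, nsmul_eq_mul]
  push_cast
  ring

lemma sum_eq_zero_of_four_dvd_sum_sign2 {ι : Type*} {s : Finset ι} (hs : 4 ∣ s.card)
    {g : ι → ZMod 2} (h : 4 ∣ ∑ x ∈ s, sign2 (g x)) : ∑ x ∈ s, g x = 0 := by
  have hsign : ∑ x ∈ s, sign2 (g x) = s.card - 2 * ∑ x ∈ s, ((g x).val : ℤ) := by
    simp [sign2_eq_one_sub_two_mul_val, sum_sub_distrib, mul_sum]
  have hval : 2 ∣ ∑ x ∈ s, ((g x).val : ℤ) := by omega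
  simpa using (ZMod.intCast_zmod_eq_zero_iff_dvd _ 2).mpr hval

section

variable {m : ℕ}

def walsh (g : (Fin m → ZMod 2) → ZMod 2) (u : Fin m → ZMod 2) : ℤ :=
  ∑ x, sign2 (g x + u ⬝ᵥ x)

def subcube (S : Finset (Fin m)) : Finset (Fin m → ZMod 2) :=
  univ.filter fun x => ∀ j, x j = 1 → j ∈ S

lemma mem_subcube_iff {S : Finset (Fin m)} {x : Fin m → ZMod 2} :
    x ∈ subcube S ↔ ∀ j ∉ S, x j = 0 := by
  have ne_one_iff : ∀ z : ZMod 2, ¬z = 1 ↔ z = 0 := by decide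
  simp only [subcube, mem_filter, mem_univ, true_and]
  exact forall_congr' fun j => by rw [← not_imp_not, ne_one_iff]

lemma subcube_eq_piFinset (S : Finset (Fin m)) :
    subcube S = Fintype.piFinset fun j => if j ∈ S then univ else {0} := by
  ext x
  rw [mem_subcube_iff, Fintype.mem_piFinset]
  refine forall_congr' fun j => ?_
  by_cases hj : j ∈ S <;> simp [hj]

lemma card_subcube (S : Finset (Fin m)) : (subcube S).card = 2 ^ S.card := by
  simp [subcube_eq_piFinset, Fintype.card_piFinset, apply_ite Finset.card, prod_ite_mem]

lemma sum_subcube_sign2_dotProduct (T : Finset (Fin m)) (x : Fin m → ZMod 2) :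
    ∑ u ∈ subcube T, sign2 (u ⬝ᵥ x) = if ∀ j ∈ T, x j = 0 then 2 ^ T.card else 0 := by
  have factor : ∀ j, ∑ z ∈ (if j ∈ T then univ else {0} : Finset (ZMod 2)), sign2 (z * x j)
      = if j ∈ T then (if x j = 0 then 2 else 0) else 1 := by
    intro j
    by_cases hj : j ∈ T
    · simp only [hj, if_true]
      exact sum_sign2_mul (x j)
    · simp [hj, sign2]
  simp_rw [subcube_eq_piFinset, dotProduct, sign2_sum]
  rw [← prod_univ_sum (fun j => if j ∈ T then univ else {0}) fun j z => sign2 (z * x j)]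
  simp_rw [factor]
  rw [prod_ite_mem, univ_inter, prod_ite_zero, prod_const]
  congr

lemma sum_walsh_subcube_compl (g : (Fin m → ZMod 2) → ZMod 2) (S : Finset (Fin m)) :
    ∑ u ∈ subcube Sᶜ, walsh g u = 2 ^ Sᶜ.card * ∑ x ∈ subcube S, sign2 (g x) := by
  have hmem : ∀ x, (∀ j ∈ Sᶜ, x j = 0) ↔ x ∈ subcube S := fun x => by
    simp [mem_subcube_iff]
  simp_rw [walsh, sign2_add]
  rw [sum_comm]
  simp_rw [← mul_sum, sum_subcube_sign2_dotProduct, hmem, mul_ite, mul_zero, sum_ite_mem,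
    univ_inter, mul_sum, mul_comm]

section BentFunctions

variable {f : (Fin m → ZMod 2) → ZMod 4} {a b : (Fin m → ZMod 2) → ZMod 2}

lemma two_mul_fourier4_eq (hab : ∀ x, f x = ((a x).val : ZMod 4) + 2 * ((b x).val : ZMod 4))
    (u : Fin m → ZMod 2) :
    2 * fourier4 f u = (1 + I) * walsh b u + (1 - I) * walsh (a + b) u := by
  simp only [fourier4, walsh, mul_sum, Int.cast_sum, ← sum_add_distrib, hab]
  exact sum_congr rfl fun x _ => two_mul_I_pow_mul_neg_one_pow (a x) (b x) _

lemma walsh_sq_add_walsh_sq (hf : ∀ u, normSq (fourier4 f u) = 2 ^ m)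
    (hab : ∀ x, f x = ((a x).val : ZMod 4) + 2 * ((b x).val : ZMod 4)) (u : Fin m → ZMod 2) :
    walsh b u ^ 2 + walsh (a + b) u ^ 2 = 2 ^ (m + 1) := by
  have h := congrArg normSq (two_mul_fourier4_eq hab u)
  rw [normSq_mul, hf, ← ofReal_intCast, ← ofReal_intCast,
    normSq_one_add_I_mul_add_one_sub_I_mul, normSq_ofNat] at h
  have hreal : (walsh b u : ℝ) ^ 2 + (walsh (a + b) u : ℝ) ^ 2 = 2 ^ (m + 1) := by
    rw [pow_succ (2 : ℝ) m]
    linarith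
  exact_mod_cast hreal

end BentFunctions

lemma two_pow_dvd_sum_walsh_subcube_compl (hm : 2 < m) {g : (Fin m → ZMod 2) → ZMod 2}
    (hg : ∀ u, ∃ C : ℤ, walsh g u ^ 2 + C ^ 2 = 2 ^ (m + 1)) {S : Finset (Fin m)}
    (hS : (m + 1) / 2 < S.card) : 2 ^ (Sᶜ.card + 2) ∣ ∑ u ∈ subcube Sᶜ, walsh g u := by
  have hcard : Sᶜ.card + S.card = m := by
    have hSm : S.card ≤ m := by simpa using card_le_univ S
    rw [card_compl, Fintype.card_fin]
    omega
  obtain ⟨t, rfl | rfl⟩ := Nat.even_or_odd' m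
  · have hW : ∀ u, walsh g u ≡ 2 ^ t [ZMOD 2 ^ (t + 1)] := fun u =>
      (hg u).elim fun _ hC => modEq_two_pow_of_sq_add_sq_eq_two_pow_odd t hC
    by_cases hk : Sᶜ.card + 2 ≤ t
    · refine (pow_dvd_pow 2 hk).trans (dvd_sum fun u _ => ?_)
      exact (Int.ModEq.dvd_iff ((hW u).symm.of_dvd (pow_dvd_pow 2 t.le_succ))).1 dvd_rfl
    · have hcube : Even (subcube Sᶜ).card := by
        rw [card_subcube]
        exact (Nat.even_pow' (by omega)).2 even_two
      exact (pow_dvd_pow 2 (by omega)).trans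
        (two_pow_succ_dvd_sum_of_modEq hcube t fun u _ => hW u)
  · refine (pow_dvd_pow 2 (by omega : Sᶜ.card + 2 ≤ t + 1)).trans (dvd_sum fun u _ => ?_)
    obtain ⟨C, hC⟩ := hg u
    exact two_pow_dvd_of_sq_add_sq_eq_two_pow_even (t + 1) (hC.trans (by ring))

theorem sum_subcube_eq_zero_of_walsh_sq_add_sq (hm : 2 < m) {g : (Fin m → ZMod 2) → ZMod 2}
    (hg : ∀ u, ∃ C : ℤ, walsh g u ^ 2 + C ^ 2 = 2 ^ (m + 1)) {S : Finset (Fin m)}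
    (hS : (m + 1) / 2 < S.card) : ∑ x ∈ subcube S, g x = 0 := by
  have hdvd := two_pow_dvd_sum_walsh_subcube_compl hm hg hS
  rw [sum_walsh_subcube_compl, pow_add, mul_dvd_mul_iff_left (by positivity)] at hdvd
  refine sum_eq_zero_of_four_dvd_sum_sign2 ?_ hdvd
  rw [card_subcube]
  exact (pow_dvd_pow 2 (by omega : 2 ≤ S.card) : 2 ^ 2 ∣ 2 ^ S.card)

end

/-- If `f = a + 2b` is a `ZMod 4`-valued bent function in `m > 2` variables, then both `a`
and `b` have algebraic degree at most `⌈m/2⌉`: every ANF coefficient at a set `S` with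
`|S| > ⌈m/2⌉` vanishes. -/
theorem stmt4 (m : ℕ) (hm : 2 < m) (f : (Fin m → ZMod 2) → ZMod 4)
    (hf : ∀ u, Complex.normSq (fourier4 f u) = 2 ^ m)
    (a b : (Fin m → ZMod 2) → ZMod 2)
    (hab : ∀ x, f x = ((a x).val : ZMod 4) + 2 * ((b x).val : ZMod 4)) :
    ∀ S : Finset (Fin m), S.card > (m + 1) / 2 →
      (∑ x ∈ Finset.univ.filter (fun x : Fin m → ZMod 2 => ∀ j, x j = 1 → j ∈ S), a x) = 0 ∧
      (∑ x ∈ Finset.univ.filter (fun x : Fin m → ZMod 2 => ∀ j, x j = 1 → j ∈ S), b x) = 0 := by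
  intro S hS
  have hsq := walsh_sq_add_walsh_sq hf hab
  have hb : ∑ x ∈ subcube S, b x = 0 :=
    sum_subcube_eq_zero_of_walsh_sq_add_sq hm (fun u => ⟨_, hsq u⟩) hS
  have ha : ∑ x ∈ subcube S, (a + b) x = 0 :=
    sum_subcube_eq_zero_of_walsh_sq_add_sq hm (fun u => ⟨_, (add_comm _ _).trans (hsq u)⟩) hS
  rw [Pi.add_def, sum_add_distrib, hb, add_zero] at ha
  exact ⟨ha, hb⟩
end

section
/- Let m > 2 and let f, g : (Fin m → ZMod 2) → ZMod 4 be two distinct bent functions. Then the Lee distance between f and g is at least 2^(m/2) (natural-number division, equal to 2^{⌊m/2⌋}); that is, ∑_{x} min ((f x − g x).val) (4 − (f x − g x).val) ≥ 2^(m/2). In particular every quaternary constant-amplitude code of length 2^m has minimum Lee distance at least 2^{⌊m/2⌋}. -/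
/-!
The Fourier coefficients of a `ZMod 4`-valued function are Gaussian integers, of norm `2 ^ m`
when the function is bent. For two such Gaussian integers `z ≠ w`, `z * conj w` has norm `4 ^ m`,
which forces `2 ^ m ∣ Re (z * conj w)`; hence `|z - w|² = 2 ^ (m + 1) - 2 Re (z * conj w)` is a
positive multiple of `2 ^ (m + 1)`. Since the Walsh characters are linearly independent, distinct
`f` and `g` have distinct coefficients at some `u`, while
`|f̂ u - ĝ u| ≤ ∑ₓ |i ^ f x - i ^ g x| ≤ √2 · d_Lee (f, g)`. So `2 ^ m ≤ d_Lee (f, g) ^ 2`.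
-/

open Complex Finset

theorem Int.two_pow_dvd_of_sq_add_sq_eq_four_pow :
    ∀ {m : ℕ} {a b : ℤ}, a ^ 2 + b ^ 2 = 4 ^ m → 2 ^ m ∣ a ∧ 2 ^ m ∣ b
  | 0, _, _, _ => by simp
  | m + 1, a, b, h => by
    have h4 : 4 ∣ a ^ 2 + b ^ 2 := h ▸ dvd_pow_self 4 m.succ_ne_zero
    rcases Int.even_or_odd' a with ⟨p, rfl | rfl⟩ <;>
      rcases Int.even_or_odd' b with ⟨q, rfl | rfl⟩
    · have : p ^ 2 + q ^ 2 = 4 ^ m := mul_left_cancel₀ four_ne_zero (by linear_combination h)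
      obtain ⟨hp, hq⟩ := two_pow_dvd_of_sq_add_sq_eq_four_pow this
      rw [pow_succ']
      exact ⟨mul_dvd_mul_left 2 hp, mul_dvd_mul_left 2 hq⟩
    all_goals ring_nf at h4; omega

namespace GaussianInt

theorem two_pow_dvd_re_of_norm_eq_four_pow {m : ℕ} {z : GaussianInt} (h : z.norm = 4 ^ m) :
    2 ^ m ∣ z.re :=
  (Int.two_pow_dvd_of_sq_add_sq_eq_four_pow (b := z.im) (by rw [← h, Zsqrtd.norm_def]; ring)).1

theorem two_pow_succ_le_norm_sub {m : ℕ} {z w : GaussianInt} (hz : z.norm = 2 ^ m)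
    (hw : w.norm = 2 ^ m) (hne : z ≠ w) : 2 ^ (m + 1) ≤ (z - w).norm := by
  obtain ⟨k, hk⟩ : 2 ^ m ∣ (z * star w).re := by
    refine two_pow_dvd_re_of_norm_eq_four_pow ?_
    rw [Zsqrtd.norm_mul, Zsqrtd.norm_conj, hz, hw, ← mul_pow]
    norm_num
  have hnorm : (z - w).norm = 2 ^ (m + 1) * (1 - k) := by
    have : (z - w).norm = z.norm + w.norm - 2 * (z * star w).re := by
      simp only [Zsqrtd.norm_def, Zsqrtd.re_sub, Zsqrtd.im_sub, Zsqrtd.re_mul, Zsqrtd.re_star,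
        Zsqrtd.im_star]
      ring
    rw [this, hz, hw, hk]
    ring
  exact Int.le_of_dvd (norm_pos.2 (sub_ne_zero.2 hne)) ⟨1 - k, hnorm⟩

end GaussianInt

theorem two_pow_succ_le_normSq_sub {m : ℕ} {z w : ℂ} (hz : z ∈ GaussianInt.toComplex.range)
    (hw : w ∈ GaussianInt.toComplex.range) (hz' : normSq z = 2 ^ m) (hw' : normSq w = 2 ^ m)
    (hne : z ≠ w) : 2 ^ (m + 1) ≤ normSq (z - w) := by
  obtain ⟨z, rfl⟩ := hz
  obtain ⟨w, rfl⟩ := hw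
  rw [← GaussianInt.intCast_real_norm] at hz' hw'
  rw [← map_sub, ← GaussianInt.intCast_real_norm]
  exact_mod_cast GaussianInt.two_pow_succ_le_norm_sub (by exact_mod_cast hz')
    (by exact_mod_cast hw') (ne_of_apply_ne _ hne)

theorem fourier4_mem_range_toComplex {m : ℕ} (f : (Fin m → ZMod 2) → ZMod 4)
    (u : Fin m → ZMod 2) : fourier4 f u ∈ GaussianInt.toComplex.range := by
  have hI : I ∈ GaussianInt.toComplex.range := ⟨⟨0, 1⟩, by simp [GaussianInt.toComplex_def]⟩
  exact Subring.sum_mem _ fun x _ => Subring.mul_mem _ (Subring.pow_mem _ hI _)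
    (Subring.pow_mem _ (Subring.neg_mem _ (Subring.one_mem _)) _)

theorem AddChar.zmodChar_injective {C : Type*} [CommMonoid C] {n : ℕ} [NeZero n] {ζ : C}
    (hζ : IsPrimitiveRoot ζ n) : Function.Injective (AddChar.zmodChar n hζ.pow_eq_one) :=
  fun a b h => ZMod.val_injective n (hζ.pow_inj (ZMod.val_lt a) (ZMod.val_lt b) h)

noncomputable def iChar : AddChar (ZMod 4) ℂ :=
  AddChar.zmodChar 4 Complex.isPrimitiveRoot_I.pow_eq_one

theorem iChar_apply (a : ZMod 4) : iChar a = I ^ a.val := rfl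

noncomputable def signChar : AddChar (ZMod 2) ℂ :=
  AddChar.zmodChar 2 (IsPrimitiveRoot.neg_one 0 (by norm_num)).pow_eq_one

noncomputable def walshChar {m : ℕ} (x : Fin m → ZMod 2) : AddChar (Fin m → ZMod 2) ℂ :=
  signChar.compAddMonoidHom
    { toFun := fun u => ∑ j, u j * x j
      map_zero' := by simp
      map_add' := fun u v => by simp only [Pi.add_apply, add_mul, sum_add_distrib] }

theorem fourier4_eq_sum_walshChar {m : ℕ} (f : (Fin m → ZMod 2) → ZMod 4)
    (u : Fin m → ZMod 2) : fourier4 f u = ∑ x, iChar (f x) * walshChar x u :=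
  rfl

theorem walshChar_injective {m : ℕ} : Function.Injective (walshChar (m := m)) := by
  intro x y h
  funext j
  have := DFunLike.congr_fun h (Pi.single j 1)
  simp only [walshChar, AddChar.compAddMonoidHom_apply, AddMonoidHom.coe_mk, ZeroHom.coe_mk,
    Pi.single_apply, ite_mul, one_mul, zero_mul, sum_ite_eq', mem_univ, if_true] at this
  exact AddChar.zmodChar_injective (IsPrimitiveRoot.neg_one 0 (by norm_num)) this

theorem fourier4_injective {m : ℕ} : Function.Injective (fourier4 (m := m)) := by
  intro f g h
  have hlin :=
    (AddChar.linearIndependent (Fin m → ZMod 2) ℂ).comp walshChar walshChar_injective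
  have hzero := Fintype.linearIndependent_iff.1 hlin (fun x => iChar (f x) - iChar (g x)) <| by
    funext u
    simpa [fourier4_eq_sum_walshChar, sub_mul, sum_sub_distrib, sub_eq_zero] using congrFun h u
  funext x
  exact AddChar.zmodChar_injective Complex.isPrimitiveRoot_I (sub_eq_zero.1 (hzero x))

def leeWeight (z : ZMod 4) : ℕ := min z.val (4 - z.val)

def leeDist {α : Type*} [Fintype α] (f g : α → ZMod 4) : ℕ := ∑ x, leeWeight (f x - g x)

theorem norm_iChar_sub_one_le (a : ZMod 4) : ‖iChar a - 1‖ ≤ √2 * leeWeight a := by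
  have hsq : normSq (iChar a - 1) ≤ 2 * (leeWeight a : ℝ) ^ 2 := by
    rw [iChar_apply, leeWeight]
    have := a.val_lt
    interval_cases a.val <;> norm_num [normSq_apply, pow_succ]
  calc ‖iChar a - 1‖ = √(normSq (iChar a - 1)) := rfl
    _ ≤ √(2 * (leeWeight a : ℝ) ^ 2) := Real.sqrt_le_sqrt hsq
    _ = √2 * leeWeight a := by rw [Real.sqrt_mul zero_le_two, Real.sqrt_sq (Nat.cast_nonneg _)]

theorem norm_iChar_sub_iChar_le (a b : ZMod 4) :
    ‖iChar a - iChar b‖ ≤ √2 * leeWeight (a - b) := by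
  have : iChar a - iChar b = iChar b * (iChar (a - b) - 1) := by
    rw [mul_sub, ← AddChar.map_add_eq_mul, add_sub_cancel, mul_one]
  rw [this, norm_mul, AddChar.norm_apply, one_mul]
  exact norm_iChar_sub_one_le _

theorem norm_fourier4_sub_le {m : ℕ} (f g : (Fin m → ZMod 2) → ZMod 4) (u : Fin m → ZMod 2) :
    ‖fourier4 f u - fourier4 g u‖ ≤ √2 * leeDist f g := by
  simp only [fourier4_eq_sum_walshChar, ← sum_sub_distrib, ← sub_mul]
  calc ‖∑ x, (iChar (f x) - iChar (g x)) * walshChar x u‖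
      ≤ ∑ x, ‖(iChar (f x) - iChar (g x)) * walshChar x u‖ := norm_sum_le _ _
    _ = ∑ x, ‖iChar (f x) - iChar (g x)‖ := by simp only [norm_mul, AddChar.norm_apply, mul_one]
    _ ≤ ∑ x, √2 * leeWeight (f x - g x) := sum_le_sum fun x _ => norm_iChar_sub_iChar_le _ _
    _ = √2 * leeDist f g := by rw [← mul_sum, leeDist, Nat.cast_sum]

theorem Nat.two_pow_div_two_le_of_two_pow_le_sq {m d : ℕ} (h : 2 ^ m ≤ d ^ 2) :
    2 ^ (m / 2) ≤ d := by
  refine (Nat.pow_le_pow_iff_left two_ne_zero).1 (le_trans ?_ h)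
  rw [← pow_mul]
  exact Nat.pow_le_pow_right two_pos (Nat.div_mul_le_self m 2)

theorem stmt6_general (m : ℕ) (f g : (Fin m → ZMod 2) → ZMod 4) (hfg : f ≠ g)
    (hf : ∀ u, Complex.normSq (fourier4 f u) = 2 ^ m)
    (hg : ∀ u, Complex.normSq (fourier4 g u) = 2 ^ m) :
    2 ^ (m / 2) ≤
      ∑ x : Fin m → ZMod 2, min (f x - g x).val (4 - (f x - g x).val) := by
  obtain ⟨u, hu⟩ : ∃ u, fourier4 f u ≠ fourier4 g u := by
    by_contra! h
    exact hfg (fourier4_injective (funext h))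
  have hlower := two_pow_succ_le_normSq_sub (fourier4_mem_range_toComplex f u)
    (fourier4_mem_range_toComplex g u) (hf u) (hg u) hu
  have hsq : (2 : ℝ) * 2 ^ m ≤ 2 * (leeDist f g : ℝ) ^ 2 :=
    calc (2 : ℝ) * 2 ^ m = 2 ^ (m + 1) := (pow_succ' _ _).symm
      _ ≤ ‖fourier4 f u - fourier4 g u‖ ^ 2 := by rwa [Complex.sq_norm]
      _ ≤ (√2 * leeDist f g) ^ 2 := pow_le_pow_left₀ (norm_nonneg _) (norm_fourier4_sub_le f g u) 2
      _ = 2 * (leeDist f g : ℝ) ^ 2 := by rw [mul_pow, Real.sq_sqrt zero_le_two]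
  exact Nat.two_pow_div_two_le_of_two_pow_le_sq (d := leeDist f g)
    (by exact_mod_cast le_of_mul_le_mul_left hsq two_pos)

/-- Two distinct `ZMod 4`-valued bent functions in `m > 2` variables have Lee distance at
least `2^⌊m/2⌋`; hence every quaternary constant-amplitude code of length `2^m` has minimum
Lee distance at least `2^⌊m/2⌋`. -/
theorem stmt6 (m : ℕ) (hm : 2 < m) (f g : (Fin m → ZMod 2) → ZMod 4) (hfg : f ≠ g)
    (hf : ∀ u, Complex.normSq (fourier4 f u) = 2 ^ m)
    (hg : ∀ u, Complex.normSq (fourier4 g u) = 2 ^ m) :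
    2 ^ (m / 2) ≤
      ∑ x : Fin m → ZMod 2, min (f x - g x).val (4 - (f x - g x).val) :=
  stmt6_general m f g hfg hf hg
end

section
/- Let m ≥ 1 and let a, b : (Fin m → ZMod 2) → ZMod 2 be bent functions. Define f : (Fin m → ZMod 2) → ZMod 4 by f(x) = ((a x + b x).val : ZMod 4) + 2 * ((b x).val : ZMod 4), where a x + b x is computed in ZMod 2. Then f is a Z_4-valued bent function: Complex.normSq (f̂ u) = 2^m for every u. -/
/-- The (real-valued) Fourier transform of a binary Boolean function. -/
def fourier2 {m : ℕ} (g : (Fin m → ZMod 2) → ZMod 2) (u : Fin m → ZMod 2) : ℝ :=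
  ∑ x : Fin m → ZMod 2, (-1 : ℝ) ^ ((g x).val + (∑ j, u j * x j).val)

lemma key9 (s t : ZMod 2) :
    (Complex.I) ^ ((((s + t).val : ZMod 4) + 2 * ((t.val : ZMod 4))).val) =
    ((1 - Complex.I) * (-1) ^ s.val + (1 + Complex.I) * (-1) ^ t.val) / 2 := by
  have h2 : ∀ z : ZMod 2, z = 0 ∨ z = 1 := by decide
  rcases h2 s with rfl | rfl <;> rcases h2 t with rfl | rfl
  · rw [show (((((0:ZMod 2) + 0).val : ZMod 4) + 2 * (((0:ZMod 2).val : ZMod 4)))).val = 0 from rfl,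
      show ((0:ZMod 2)).val = 0 from rfl]; ring
  · rw [show (((((0:ZMod 2) + 1).val : ZMod 4) + 2 * (((1:ZMod 2).val : ZMod 4)))).val = 3 from rfl,
      show ((0:ZMod 2)).val = 0 from rfl, show ((1:ZMod 2)).val = 1 from rfl,
      pow_succ, Complex.I_sq]; ring
  · rw [show (((((1:ZMod 2) + 0).val : ZMod 4) + 2 * (((0:ZMod 2).val : ZMod 4)))).val = 1 from rfl,
      show ((0:ZMod 2)).val = 0 from rfl, show ((1:ZMod 2)).val = 1 from rfl]; ring
  · rw [show (((((1:ZMod 2) + 1).val : ZMod 4) + 2 * (((1:ZMod 2).val : ZMod 4)))).val = 2 from rfl,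
      show ((1:ZMod 2)).val = 1 from rfl, Complex.I_sq]; ring

/-- If `a, b` are binary bent functions then `f = (a ⊕ b) + 2b` (the inverse Gray image of
`g(x,y) = a(x)y ⊕ b(x)(1 ⊕ y)`) is a `ZMod 4`-valued bent function. -/
theorem stmt9 (m : ℕ) (hm : 1 ≤ m) (a b : (Fin m → ZMod 2) → ZMod 2)
    (ha : ∀ u, (fourier2 a u) ^ 2 = 2 ^ m) (hb : ∀ u, (fourier2 b u) ^ 2 = 2 ^ m)
    (f : (Fin m → ZMod 2) → ZMod 4)
    (hf : ∀ x, f x = ((a x + b x).val : ZMod 4) + 2 * ((b x).val : ZMod 4)) :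
    ∀ u, Complex.normSq (fourier4 f u) = 2 ^ m := by
  intro u
  set A : ℝ := fourier2 a u with hA
  set B : ℝ := fourier2 b u with hB
  have hF : fourier4 f u = ((1 - Complex.I) * (A : ℂ) + (1 + Complex.I) * (B : ℂ)) / 2 := by
    rw [hA, hB]
    unfold fourier4 fourier2
    push_cast
    rw [Finset.mul_sum, Finset.mul_sum, ← Finset.sum_add_distrib, Finset.sum_div]
    refine Finset.sum_congr rfl fun x _ => ?_
    rw [hf x, key9]
    rw [pow_add, pow_add]
    ring
  rw [hF]
  have h1 : ((1 - Complex.I) * (A : ℂ) + (1 + Complex.I) * (B : ℂ)) / 2 =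
      Complex.mk ((A + B) / 2) ((B - A) / 2) := by
    apply Complex.ext <;> simp [Complex.div_re, Complex.div_im, Complex.normSq] <;> ring
  rw [h1, Complex.normSq_mk]
  have hA2 := ha u
  have hB2 := hb u
  rw [← hA] at hA2
  rw [← hB] at hB2
  nlinarith [hA2, hB2]
end

section
/- Let m ≥ 1 and let g : (Fin m → ZMod 2) × ZMod 2 → ZMod 2 be a bent function of m+1 binary variables (so m is necessarily odd). Define f : (Fin m → ZMod 2) → ZMod 4 by f(x) = ((g (x,0) + g (x,1)).val : ZMod 4) + 2 * ((g (x,0)).val : ZMod 4), where g(x,0) + g(x,1) is computed in ZMod 2. Then f is a Z_4-valued bent function: Complex.normSq (f̂ u) = 2^m for every u. (f is the inverse Gray image of g.) -/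
lemma zmod2_cases : ∀ x : ZMod 2, x = 0 ∨ x = 1 := by decide

lemma sum_zmod2 {M : Type*} [AddCommMonoid M] (h : ZMod 2 → M) :
    ∑ y : ZMod 2, h y = h 0 + h 1 := Fin.sum_univ_two h

lemma key (g0 g1 c : ZMod 2) :
    Complex.I ^ ((((g0 + g1).val : ZMod 4) + 2 * ((g0).val : ZMod 4)).val) * (-1 : ℂ) ^ c.val
      = ((1 + Complex.I) * (-1 : ℂ) ^ (g0.val + c.val)
         + (1 - Complex.I) * (-1 : ℂ) ^ (g1.val + c.val)) / 2 := by
  rcases zmod2_cases g0 with h0 | h0 <;> rcases zmod2_cases g1 with h1 | h1 <;>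
    rcases zmod2_cases c with h2 | h2 <;> subst h0 h1 h2 <;>
    norm_num [show ZMod.val (0:ZMod 2) = 0 from rfl, show ZMod.val (1:ZMod 2) = 1 from rfl,
      Complex.ext_iff, pow_succ, show ((ZMod.cast (1:ZMod 2) : ZMod 4)).val = 1 from rfl,
      show ((ZMod.cast (1:ZMod 2) : ZMod 4) + 2).val = 3 from rfl,
      show ((ZMod.cast (2:ZMod 2) : ZMod 4) + 2).val = 2 from rfl,
      show ((ZMod.cast (2:ZMod 2) : ZMod 4)).val = 0 from rfl,
      show ZMod.val (1:ZMod 4) = 1 from rfl, show ZMod.val (3:ZMod 4) = 3 from rfl]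

lemma neg_one_pow_flip (d c : ZMod 2) :
    ((-1 : ℝ)) ^ (d.val + (c + 1).val) = -((-1 : ℝ)) ^ (d.val + c.val) := by
  rcases zmod2_cases d with h | h <;> rcases zmod2_cases c with h2 | h2 <;> subst h h2 <;>
    norm_num [show ZMod.val (0:ZMod 2) = 0 from rfl, show ZMod.val (1:ZMod 2) = 1 from rfl,
      show ((0:ZMod 2)+1).val = 1 from rfl, show ((1:ZMod 2)+1).val = 0 from rfl,
      show ZMod.val (2:ZMod 2) = 0 from rfl, pow_succ]

/-- If `g` is a binary bent function of `m + 1` variables, then its inverse Gray image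
`f(x) = (g(x,0) ⊕ g(x,1)) + 2·g(x,0)` is a `ZMod 4`-valued bent function in `m` variables. -/
theorem stmt10 (m : ℕ) (hm : 1 ≤ m) (g : (Fin m → ZMod 2) × ZMod 2 → ZMod 2)
    (hg : ∀ (u : Fin m → ZMod 2) (v : ZMod 2),
      (∑ p : (Fin m → ZMod 2) × ZMod 2,
        (-1 : ℝ) ^ ((g p).val + ((∑ j, u j * p.1 j) + v * p.2).val)) ^ 2 = 2 ^ (m + 1))
    (f : (Fin m → ZMod 2) → ZMod 4)
    (hf : ∀ x, f x = ((g (x, 0) + g (x, 1)).val : ZMod 4) + 2 * ((g (x, 0)).val : ZMod 4)) :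
    ∀ u, Complex.normSq (fourier4 f u) = 2 ^ m := by
  intro u
  set S0 : ℝ := ∑ x : Fin m → ZMod 2, (-1:ℝ) ^ ((g (x,0)).val + (∑ j, u j * x j).val) with hS0
  set S1 : ℝ := ∑ x : Fin m → ZMod 2, (-1:ℝ) ^ ((g (x,1)).val + (∑ j, u j * x j).val) with hS1
  have h0 : (S0 + S1) ^ 2 = 2 ^ (m + 1) := by
    have h := hg u 0
    rw [Fintype.sum_prod_type] at h
    rw [← h, hS0, hS1, ← Finset.sum_add_distrib]
    congr 1
    refine Finset.sum_congr rfl fun x _ => ?_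
    rw [sum_zmod2 (fun y => (-1 : ℝ) ^ ((g (x, y)).val + ((∑ j, u j * x j) + 0 * y).val))]
    simp
  have h1 : (S0 - S1) ^ 2 = 2 ^ (m + 1) := by
    have h := hg u 1
    rw [Fintype.sum_prod_type] at h
    rw [← h, hS0, hS1, ← Finset.sum_sub_distrib]
    congr 1
    refine Finset.sum_congr rfl fun x _ => ?_
    rw [sum_zmod2 (fun y => (-1 : ℝ) ^ ((g (x, y)).val + ((∑ j, u j * x j) + 1 * y).val))]
    rw [show ((1:ZMod 2) * 1) = 1 from rfl, show ((1:ZMod 2) * 0) = 0 from rfl,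
      neg_one_pow_flip]
    simp
    ring
  have c0 : (∑ x : Fin m → ZMod 2, (-1:ℂ) ^ ((g (x,0)).val + (∑ j, u j * x j).val)) = (S0 : ℂ) := by
    rw [hS0]; push_cast; ring
  have c1 : (∑ x : Fin m → ZMod 2, (-1:ℂ) ^ ((g (x,1)).val + (∑ j, u j * x j).val)) = (S1 : ℂ) := by
    rw [hS1]; push_cast; ring
  have hft : fourier4 f u = (((S0 + S1)/2 : ℝ) : ℂ) + (((S0 - S1)/2 : ℝ) : ℂ) * Complex.I := by
    unfold fourier4
    have step : ∀ x : Fin m → ZMod 2,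
        Complex.I ^ (f x).val * (-1 : ℂ) ^ (∑ j, u j * x j).val
          = ((1 + Complex.I) * (-1 : ℂ) ^ ((g (x,0)).val + (∑ j, u j * x j).val)
             + (1 - Complex.I) * (-1 : ℂ) ^ ((g (x,1)).val + (∑ j, u j * x j).val)) / 2 := by
      intro x
      rw [hf x]
      exact key _ _ _
    rw [Finset.sum_congr rfl (fun x _ => step x)]
    rw [← Finset.sum_div, Finset.sum_add_distrib, ← Finset.mul_sum, ← Finset.mul_sum, c0, c1]
    push_cast
    ring
  rw [hft, Complex.normSq_add_mul_I]
  have expand : ((S0+S1)/2)^2 + ((S0-S1)/2)^2 = ((S0+S1)^2 + (S0-S1)^2)/4 := by ring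
  rw [expand, h0, h1, pow_succ]
  ring
end

section
/- Let m ≥ 1 and let B : Matrix (Fin m) (Fin m) (ZMod 2) be a symmetric matrix (Bᵀ = B). Define the associated Z_4-valued quadratic form Q : (Fin m → ZMod 2) → ZMod 4 by Q(x) = ∑ j, ((B j j * x j).val : ZMod 4) + 2 * ∑_{(j,k) with j < k} ((B j k * x j * x k).val : ZMod 4), all sums in ZMod 4. Then for every u : Fin m → ZMod 2, Complex.normSq (Q̂(u)) ≤ 2^(2m − B.rank), where B.rank is the rank of B over the field ZMod 2. Equivalently, |Q̂(u)| ≤ 2^{m − rk(Q)/2}. -/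
/-- The `ZMod 4`-valued quadratic form `Q(x) = x B xᵀ = ∑_j b_{jj} x_j + 2 ∑_{j<k} b_{jk} x_j x_k`
associated with a symmetric binary matrix `B`. -/
def quadForm {m : ℕ} (B : Matrix (Fin m) (Fin m) (ZMod 2)) (x : Fin m → ZMod 2) : ZMod 4 :=
  ∑ j, ((B j j * x j).val : ZMod 4) +
    2 * ∑ p ∈ Finset.univ.filter (fun p : Fin m × Fin m => p.1 < p.2),
      ((B p.1 p.2 * x p.1 * x p.2).val : ZMod 4)

open Finset Matrix ComplexConjugate

theorem Finset.sum_sum_eq_sum_diag_add_sum_lt {ι M : Type*} [Fintype ι] [LinearOrder ι]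
    [AddCommMonoid M] (f : ι → ι → M) :
    ∑ j, ∑ k, f j k = ∑ j, f j j + ∑ p ∈ univ.filter (fun p : ι × ι => p.1 < p.2),
      (f p.1 p.2 + f p.2 p.1) := by
  classical
  have hdiag : ∑ p ∈ univ.filter (fun p : ι × ι => p.1 = p.2), f p.1 p.2 = ∑ j, f j j := by
    simp [sum_filter, Fintype.sum_prod_type]
  have hgt : ∑ p ∈ univ.filter (fun p : ι × ι => p.2 < p.1), f p.1 p.2 =
      ∑ p ∈ univ.filter (fun p : ι × ι => p.1 < p.2), f p.2 p.1 :=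
    sum_equiv (Equiv.prodComm ι ι) (by simp) (by simp)
  have hnlt : ∑ p ∈ univ.filter (fun p : ι × ι => ¬ p.1 < p.2), f p.1 p.2 =
      ∑ p ∈ univ.filter (fun p : ι × ι => p.2 < p.1), f p.1 p.2 +
        ∑ p ∈ univ.filter (fun p : ι × ι => p.1 = p.2), f p.1 p.2 := by
    rw [← sum_filter_add_sum_filter_not _ (fun p : ι × ι => p.2 < p.1), filter_filter,
      filter_filter]
    congr 2 <;> ext p <;> simp only [mem_filter, mem_univ, true_and] <;> grind
  rw [← Fintype.sum_prod_type', ← sum_filter_add_sum_filter_not univ (fun p : ι × ι => p.1 < p.2),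
    hnlt, hgt, hdiag, sum_add_distrib]
  abel

/-- Twice the `0/1`-lift of a bit; unlike the lift itself, it is additive. -/
def twiceLift : ZMod 2 →+ ZMod 4 where
  toFun a := 2 * (a.val : ZMod 4)
  map_zero' := by decide
  map_add' := by decide

noncomputable def chi4 : AddChar (ZMod 4) ℂ := AddChar.zmodChar 4 Complex.I_pow_four

noncomputable def chi2 : AddChar (ZMod 2) ℂ := AddChar.zmodChar 2 (by norm_num : (-1 : ℂ) ^ 2 = 1)

theorem chi2_one : chi2 1 = -1 := by simp [chi2, AddChar.zmodChar_apply, ZMod.val_one]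

theorem chi4_twiceLift (c : ZMod 2) : chi4 (twiceLift c) = chi2 c := by
  obtain rfl | rfl : c = 0 ∨ c = 1 := by revert c; decide
  · rfl
  · rw [show twiceLift 1 = 2 from rfl, chi2_one]
    simp [chi4, AddChar.zmodChar_apply, show (2 : ZMod 4).val = 2 from rfl]

theorem fourier4_eq_sum_chi {m : ℕ} (f : (Fin m → ZMod 2) → ZMod 4) (u : Fin m → ZMod 2) :
    fourier4 f u = ∑ x, chi4 (f x) * chi2 (u ⬝ᵥ x) := rfl

theorem sum_chi2_dotProduct {ι : Type*} [Fintype ι] [DecidableEq ι] (w : ι → ZMod 2) :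
    ∑ x : ι → ZMod 2, chi2 (x ⬝ᵥ w) = if w = 0 then 2 ^ Fintype.card ι else 0 := by
  let ψ : AddChar (ι → ZMod 2) ℂ :=
    { toFun := fun x => chi2 (x ⬝ᵥ w)
      map_zero_eq_one' := by simp
      map_add_eq_mul' := fun x y => by simp [add_dotProduct, AddChar.map_add_eq_mul] }
  have hψ : ψ = 0 ↔ w = 0 := by
    refine ⟨fun h => funext fun j => ?_, fun h => by ext x; simp [ψ, h]⟩
    have := DFunLike.congr_fun h (Pi.single j 1)
    simp only [ψ, AddChar.coe_mk, AddChar.zero_apply, single_dotProduct, one_mul] at this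
    rcases (by decide : ∀ a : ZMod 2, a = 0 ∨ a = 1) (w j) with hj | hj
    · exact hj
    · norm_num [hj, chi2_one] at this
  classical
  calc ∑ x, chi2 (x ⬝ᵥ w) = ∑ x, ψ x := rfl
    _ = _ := by simp [AddChar.sum_eq_ite, hψ]

theorem cast_val_mul_add (b x z : ZMod 2) :
    ((b * (x + z)).val : ZMod 4) = (b * x).val + (b * z).val + twiceLift (x * b * z) := by
  revert b x z; decide

theorem quadForm_eq_sum_add_sum_twiceLift {m : ℕ} (B : Matrix (Fin m) (Fin m) (ZMod 2))
    (x : Fin m → ZMod 2) :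
    quadForm B x = ∑ j, ((B j j * x j).val : ZMod 4) +
      ∑ p ∈ univ.filter (fun p : Fin m × Fin m => p.1 < p.2),
        twiceLift (B p.1 p.2 * x p.1 * x p.2) := by
  rw [quadForm, mul_sum]; rfl

theorem quadForm_add {m : ℕ} {B : Matrix (Fin m) (Fin m) (ZMod 2)} (hB : Bᵀ = B)
    (x z : Fin m → ZMod 2) :
    quadForm B (x + z) = quadForm B x + quadForm B z + twiceLift (x ⬝ᵥ B *ᵥ z) := by
  have hcross : x ⬝ᵥ B *ᵥ z = ∑ j, x j * B j j * z j +
      ∑ p ∈ univ.filter (fun p : Fin m × Fin m => p.1 < p.2),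
        (x p.1 * B p.1 p.2 * z p.2 + x p.2 * B p.2 p.1 * z p.1) := by
    simp only [dotProduct, mulVec, mul_sum, ← mul_assoc]
    exact sum_sum_eq_sum_diag_add_sum_lt fun j k => x j * B j k * z k
  have hoff : ∀ j k, twiceLift (B j k * (x j + z j) * (x k + z k)) =
      twiceLift (B j k * x j * x k) + twiceLift (B j k * z j * z k) +
        twiceLift (x j * B j k * z k + x k * B k j * z j) := by
    intro j k
    rw [← map_add, ← map_add, show B k j = B j k from congrFun (congrFun hB j) k]
    congr 1
    ring
  simp only [quadForm_eq_sum_add_sum_twiceLift, hcross, map_add, map_sum, Pi.add_apply,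
    cast_val_mul_add, hoff, sum_add_distrib]
  abel

theorem Complex.normSq_sum_eq_sum_sum_conj_mul_add {G : Type*} [AddGroup G] [Fintype G]
    (f : G → ℂ) : (normSq (∑ x, f x) : ℂ) = ∑ z, ∑ x, conj (f x) * f (x + z) := by
  calc _ = ∑ x, ∑ y, conj (f x) * f y := by rw [normSq_eq_conj_mul_self, map_sum, sum_mul_sum]
    _ = ∑ x, ∑ z, conj (f x) * f (x + z) := sum_congr rfl fun x _ =>
          (Fintype.sum_equiv (Equiv.addLeft x) _ _ fun _ => rfl).symm
    _ = _ := sum_comm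

theorem conj_mul_chi_quadForm_add {m : ℕ} {B : Matrix (Fin m) (Fin m) (ZMod 2)} (hB : Bᵀ = B)
    (u x z : Fin m → ZMod 2) :
    conj (chi4 (quadForm B x) * chi2 (u ⬝ᵥ x)) *
        (chi4 (quadForm B (x + z)) * chi2 (u ⬝ᵥ (x + z))) =
      chi4 (quadForm B z) * chi2 (u ⬝ᵥ z) * chi2 (x ⬝ᵥ B *ᵥ z) := by
  have hunit {G : Type} [AddCommGroup G] [Finite G] (ψ : AddChar G ℂ) (a : G) :
      conj (ψ a) * ψ a = 1 := by
    rw [Complex.conj_mul', AddChar.norm_apply]; norm_num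
  rw [quadForm_add hB, dotProduct_add, AddChar.map_add_eq_mul, AddChar.map_add_eq_mul,
    AddChar.map_add_eq_mul, chi4_twiceLift, map_mul]
  linear_combination (chi4 (quadForm B z) * chi2 (u ⬝ᵥ z) * chi2 (x ⬝ᵥ B *ᵥ z)) *
    (conj (chi2 (u ⬝ᵥ x)) * chi2 (u ⬝ᵥ x) * hunit chi4 (quadForm B x) + hunit chi2 (u ⬝ᵥ x))

theorem normSq_fourier4_quadForm {m : ℕ} {B : Matrix (Fin m) (Fin m) (ZMod 2)} (hB : Bᵀ = B)
    (u : Fin m → ZMod 2) :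
    (Complex.normSq (fourier4 (quadForm B) u) : ℂ) =
      2 ^ m * ∑ z ∈ univ.filter (fun z => B *ᵥ z = 0), chi4 (quadForm B z) * chi2 (u ⬝ᵥ z) := by
  simp_rw [fourier4_eq_sum_chi, Complex.normSq_sum_eq_sum_sum_conj_mul_add,
    conj_mul_chi_quadForm_add hB, ← mul_sum, sum_chi2_dotProduct, mul_ite, mul_zero, sum_ite,
    sum_const_zero, add_zero, Fintype.card_fin, mul_sum, mul_comm]

theorem card_filter_mulVec_eq_zero {K m n : Type*} [Field K] [Fintype K] [DecidableEq K]
    [Fintype m] [Fintype n] [DecidableEq n] (A : Matrix m n K) :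
    #(univ.filter fun z : n → K => A *ᵥ z = 0) = Fintype.card K ^ (Fintype.card n - A.rank) := by
  have hdim := LinearMap.finrank_range_add_finrank_ker A.mulVecLin
  rw [Module.finrank_fintype_fun_eq_card, ← Matrix.rank] at hdim
  rw [← Fintype.card_subtype, ← Nat.card_eq_fintype_card]
  change Nat.card (LinearMap.ker A.mulVecLin) = _
  rw [Module.natCard_eq_pow_finrank (K := K), Nat.card_eq_fintype_card]
  congr 1
  omega

theorem stmt13_general (m : ℕ) (B : Matrix (Fin m) (Fin m) (ZMod 2))
    (hB : B.transpose = B) :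
    ∀ u : Fin m → ZMod 2,
      Complex.normSq (fourier4 (quadForm B) u) ≤ 2 ^ (2 * m - B.rank) := by
  intro u
  have hker := card_filter_mulVec_eq_zero B
  rw [ZMod.card, Fintype.card_fin] at hker
  calc Complex.normSq (fourier4 (quadForm B) u)
      = ‖(Complex.normSq (fourier4 (quadForm B) u) : ℂ)‖ := by
        rw [Complex.norm_real, Real.norm_of_nonneg (Complex.normSq_nonneg _)]
    _ = 2 ^ m * ‖∑ z ∈ univ.filter (fun z => B *ᵥ z = 0),
          chi4 (quadForm B z) * chi2 (u ⬝ᵥ z)‖ := by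
      rw [normSq_fourier4_quadForm hB, norm_mul, norm_pow, Complex.norm_two]
    _ ≤ 2 ^ m * 2 ^ (m - B.rank) := by
      gcongr
      refine (norm_sum_le _ _).trans ?_
      simp [hker]
    _ = 2 ^ (2 * m - B.rank) := by
      rw [← pow_add]
      have hrank := B.rank_le_width
      congr 1
      omega

/-- The Fourier transform of a `ZMod 4`-valued quadratic form of rank `r` is bounded in
magnitude by `2^{m - r/2}`, i.e. `|Q̂(u)|² ≤ 2^{2m - r}`. -/
theorem stmt13 (m : ℕ) (hm : 1 ≤ m) (B : Matrix (Fin m) (Fin m) (ZMod 2))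
    (hB : B.transpose = B) :
    ∀ u : Fin m → ZMod 2,
      Complex.normSq (fourier4 (quadForm B) u) ≤ 2 ^ (2 * m - B.rank) :=
  stmt13_general m B hB
end

section
/- Let m ≥ 1, let E := GaloisField 2 m, let t be a natural number with 2·t < m, and let a : Fin (t+1) → E with a ≠ 0. Then the radical of the symmetric bilinear form B_a(x,y) = Tr(y · L_a(x)) has ZMod 2-dimension at most 2t; concretely, Fintype.card {x : E // ∀ y : E, Algebra.trace (ZMod 2) E (y * L_a x) = 0} ≤ 2^(2·t). Equivalently, the rank of B_a is at least m − 2t, so every nonzero matrix in the set M(t,m) has rank at least m − 2t. -/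
/-!
Since the trace form of `GF(2^m)` over `𝔽₂` is nondegenerate, the radical of `B_a` is the kernel
of `L_a`. Raising `L_a(x)` to the power `2^t` and using `x^(2^m) = x` turns it into a polynomial in
`x` of degree at most `2^(2t)` whose coefficient at `X^(2^(t+i))` is `a_i^(2^t)`; for `a ≠ 0` this
polynomial is nonzero, so it has at most `2^(2t)` roots.
-/

/-- The linearized polynomial map
`L_a(x) = a₀ x + ∑_{j=1}^{t} (a_j x^{2^j} + a_j^{2^{m-j}} x^{2^{m-j}})` on `GF(2^m)`. -/
noncomputable def La (m t : ℕ) (a : Fin (t + 1) → GaloisField 2 m) (x : GaloisField 2 m) :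
    GaloisField 2 m :=
  a 0 * x + ∑ j : Fin t,
    (a j.succ * x ^ (2 ^ (j.val + 1)) +
      (a j.succ) ^ (2 ^ (m - (j.val + 1))) * x ^ (2 ^ (m - (j.val + 1))))

open Polynomial

theorem forall_trace_mul_eq_zero_iff {K L : Type*} [Field K] [Field L] [Algebra K L]
    [FiniteDimensional K L] [Algebra.IsSeparable K L] {z : L} :
    (∀ y : L, Algebra.trace K L (y * z) = 0) ↔ z = 0 := by
  refine ⟨fun h ↦ (traceForm_nondegenerate K L).1 z fun y ↦ ?_, fun h y ↦ by simp [h]⟩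
  rw [Algebra.traceForm_apply, mul_comm, h]

theorem Polynomial.natCard_le_natDegree_of_forall_isRoot {R : Type*} [CommRing R] [IsDomain R]
    {P : R → Prop} {Q : R[X]} (hQ : Q ≠ 0) (hroot : ∀ x, P x → Q.IsRoot x) :
    Nat.card {x // P x} ≤ Q.natDegree := by
  classical
  calc Nat.card {x // P x} ≤ Nat.card Q.roots.toFinset :=
        Nat.card_le_card_of_injective (fun x ↦ ⟨x.1, by simpa [hQ] using hroot x.1 x.2⟩)
          fun _ _ h ↦ Subtype.ext (Subtype.mk.inj h)
    _ ≤ Q.natDegree := by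
      rw [Nat.card_eq_fintype_card, Fintype.card_coe]
      exact (Multiset.toFinset_card_le _).trans Q.card_roots'

theorem GaloisField.pow_pow_add (p m n : ℕ) [Fact p.Prime] (x : GaloisField p m) :
    x ^ p ^ (m + n) = x ^ p ^ n := by
  rcases eq_or_ne m 0 with rfl | hm
  · rw [zero_add]
  · have : Fintype (GaloisField p m) := Fintype.ofFinite _
    rw [pow_add, pow_mul, ← GaloisField.card p m hm, Nat.card_eq_fintype_card,
      FiniteField.pow_card]

theorem La_eq_sum (m t : ℕ) (a : Fin (t + 1) → GaloisField 2 m) (x : GaloisField 2 m) :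
    La m t a x = ∑ i : Fin (t + 1), a i * x ^ 2 ^ (i : ℕ) +
      ∑ j : Fin t, (a j.succ * x) ^ 2 ^ (m - (j + 1)) := by
  simp only [La, Fin.sum_univ_succ, Finset.sum_add_distrib, mul_pow, Fin.val_zero, pow_zero,
    pow_one, Fin.val_succ, add_assoc]

noncomputable def LaPowPoly (m t : ℕ) (a : Fin (t + 1) → GaloisField 2 m) :
    (GaloisField 2 m)[X] :=
  ∑ i : Fin (t + 1), C (a i ^ 2 ^ t) * X ^ 2 ^ (t + i) +
    ∑ j : Fin t, C (a j.succ ^ 2 ^ (t - (j + 1))) * X ^ 2 ^ (t - (j + 1))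

theorem eval_LaPowPoly {m t : ℕ} (ht : t ≤ m) (a : Fin (t + 1) → GaloisField 2 m)
    (x : GaloisField 2 m) : (LaPowPoly m t a).eval x = La m t a x ^ 2 ^ t := by
  rw [La_eq_sum, add_pow_char_pow, sum_pow_char_pow, sum_pow_char_pow]
  simp only [LaPowPoly, eval_add, eval_finsetSum, eval_mul, eval_C, eval_pow, eval_X]
  congr 1
  · refine Finset.sum_congr rfl fun i _ ↦ ?_
    rw [mul_pow, ← pow_mul, ← pow_add, add_comm (i : ℕ)]
  · refine Finset.sum_congr rfl fun j _ ↦ ?_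
    have hj : (j : ℕ) + 1 ≤ t := j.isLt
    rw [← mul_pow, ← pow_mul, ← pow_add, show m - (j + 1) + t = m + (t - (j + 1)) by omega,
      GaloisField.pow_pow_add]

theorem coeff_LaPowPoly (m t : ℕ) (a : Fin (t + 1) → GaloisField 2 m) (i : Fin (t + 1)) :
    (LaPowPoly m t a).coeff (2 ^ (t + i)) = a i ^ 2 ^ t := by
  have hlow : ∀ j : Fin t, 2 ^ (t + (i : ℕ)) ≠ 2 ^ (t - (j + 1)) := fun j h ↦ by
    have := Nat.pow_right_injective le_rfl h
    omega
  simp only [LaPowPoly, coeff_add, finsetSum_coeff, coeff_C_mul_X_pow]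
  simp [Fin.val_inj, hlow]

theorem LaPowPoly_ne_zero {m t : ℕ} {a : Fin (t + 1) → GaloisField 2 m} (ha : a ≠ 0) :
    LaPowPoly m t a ≠ 0 := by
  obtain ⟨i, hi⟩ := Function.ne_iff.mp ha
  intro h
  exact pow_ne_zero _ hi (by rw [← coeff_LaPowPoly, h, coeff_zero])

theorem natDegree_LaPowPoly_le (m t : ℕ) (a : Fin (t + 1) → GaloisField 2 m) :
    (LaPowPoly m t a).natDegree ≤ 2 ^ (2 * t) := by
  have hmono (k : ℕ) (c : GaloisField 2 m) (hk : k ≤ 2 * t) :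
      (C c * X ^ 2 ^ k).natDegree ≤ 2 ^ (2 * t) :=
    (natDegree_C_mul_X_pow_le _ _).trans (Nat.pow_le_pow_right two_pos hk)
  refine (natDegree_add_le _ _).trans (max_le ?_ ?_) <;>
    refine natDegree_sum_le_of_forall_le _ _ fun i _ ↦ hmono _ _ ?_ <;> omega

theorem stmt16_general (m t : ℕ) (ht : 2 * t < m)
    (a : Fin (t + 1) → GaloisField 2 m) (ha : a ≠ 0) :
    @Fintype.card
        {x : GaloisField 2 m //
          ∀ y : GaloisField 2 m,
            Algebra.trace (ZMod 2) (GaloisField 2 m) (y * La m t a x) = 0}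
        (Fintype.ofFinite _)
      ≤ 2 ^ (2 * t) := by
  have hroot (x : GaloisField 2 m)
      (hx : ∀ y, Algebra.trace (ZMod 2) (GaloisField 2 m) (y * La m t a x) = 0) :
      (LaPowPoly m t a).IsRoot x := by
    rw [IsRoot, eval_LaPowPoly (by omega), forall_trace_mul_eq_zero_iff.mp hx,
      zero_pow (by positivity)]
  rw [← @Nat.card_eq_fintype_card _ (Fintype.ofFinite _)]
  exact (natCard_le_natDegree_of_forall_isRoot (LaPowPoly_ne_zero ha) hroot).trans
    (natDegree_LaPowPoly_le m t a)

/-- For `a ≠ 0` and `2t < m`, the radical of the symmetric bilinear form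
`B_a(x,y) = Tr(y · L_a(x))` on `GF(2^m)` has at most `2^{2t}` elements (dimension at most
`2t`), so the rank of `B_a` is at least `m - 2t`. -/
theorem stmt16 (m t : ℕ) (hm : 1 ≤ m) (ht : 2 * t < m)
    (a : Fin (t + 1) → GaloisField 2 m) (ha : a ≠ 0) :
    @Fintype.card
        {x : GaloisField 2 m //
          ∀ y : GaloisField 2 m,
            Algebra.trace (ZMod 2) (GaloisField 2 m) (y * La m t a x) = 0}
        (Fintype.ofFinite _)
      ≤ 2 ^ (2 * t) :=
  stmt16_general m t ht a ha
end

section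
/- Let m ≥ 1, let E := GaloisField 2 m, let t be a natural number with 2·t < m, and let a : Fin (t+1) → E with a ≠ 0. Then the linearized polynomial map L_a has at most 2^(2·t) roots in E: Fintype.card {x : E // L_a x = 0} ≤ 2^(2·t). -/
open Polynomial

/-- Auxiliary polynomial: `(L_a x)^{2^t}` as a polynomial in `x`. -/
noncomputable def Qpoly (m t : ℕ) (a : Fin (t + 1) → GaloisField 2 m) :
    Polynomial (GaloisField 2 m) :=
  C (a 0 ^ 2 ^ t) * X ^ (2 ^ t) + ∑ j : Fin t,
    (C (a j.succ ^ 2 ^ t) * X ^ (2 ^ (t + (j.val + 1))) +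
     C (a j.succ ^ (2 ^ (m - (j.val + 1)) * 2 ^ t)) * X ^ (2 ^ (t - (j.val + 1))))

lemma pow_card_aux (m : ℕ) (hm : 1 ≤ m) (x : GaloisField 2 m) (k : ℕ) :
    x ^ (2 ^ m * k) = x ^ k := by
  haveI : Fintype (GaloisField 2 m) := Fintype.ofFinite _
  have h1 : x ^ (2 ^ m) = x := by
    have hc : Fintype.card (GaloisField 2 m) = 2 ^ m := by
      rw [← Nat.card_eq_fintype_card, GaloisField.card 2 m (by omega)]
    rw [← hc]; exact FiniteField.pow_card x
  rw [pow_mul, h1]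

lemma Qpoly_eval (m t : ℕ) (hm : 1 ≤ m) (ht : 2 * t < m)
    (a : Fin (t + 1) → GaloisField 2 m) (x : GaloisField 2 m) :
    (Qpoly m t a).eval x = (La m t a x) ^ (2 ^ t) := by
  have : (La m t a x) ^ (2 ^ t) = iterateFrobenius (GaloisField 2 m) 2 t (La m t a x) :=
    (iterateFrobenius_def 2 t _).symm
  rw [this, La, Qpoly]
  simp only [map_add, map_mul, map_sum, map_pow, iterateFrobenius_def,
    eval_add, eval_finset_sum, eval_mul, eval_pow, eval_C, eval_X, ← pow_mul]
  congr 1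
  apply Finset.sum_congr rfl
  intro j _
  have hj1 : j.val + 1 ≤ t := j.2
  congr 1
  · congr 1
    rw [← pow_add]
  · have hx2 : x ^ (2 ^ t * 2 ^ (m - (j.val + 1))) = x ^ 2 ^ (t - (j.val + 1)) := by
      rw [← pow_add,
        show t + (m - (j.val + 1)) = m + (t - (j.val + 1)) by omega,
        pow_add]
      exact pow_card_aux m hm x _
    rw [hx2, mul_comm (2 ^ (m - (j.val + 1)))]

lemma Qpoly_ne_zero (m t : ℕ) (hm : 1 ≤ m) (ht : 2 * t < m)
    (a : Fin (t + 1) → GaloisField 2 m) (ha : a ≠ 0) :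
    Qpoly m t a ≠ 0 := by
  obtain ⟨j, hj⟩ := Function.ne_iff.mp ha
  simp only [Pi.zero_apply] at hj
  intro hQ
  induction j using Fin.cases with
  | zero =>
      have h0 : (Qpoly m t a).coeff (2 ^ t) = a 0 ^ 2 ^ t := by
        rw [Qpoly]
        simp only [coeff_add, finset_sum_coeff, coeff_C_mul, coeff_X_pow,
          eq_self_iff_true, if_true]
        simp only [mul_zero, add_zero, zero_add, mul_one]
        rw [Finset.sum_eq_zero fun k _ => by
          have hk1 : k.val + 1 ≤ t := k.2
          rw [if_neg (fun h => by have := Nat.pow_right_injective (le_refl 2) h; omega :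
              ¬ (2:ℕ) ^ t = 2 ^ (t + (k.val + 1))),
            if_neg (fun h => by have := Nat.pow_right_injective (le_refl 2) h; omega :
              ¬ (2:ℕ) ^ t = 2 ^ (t - (k.val + 1))), mul_zero, mul_zero, add_zero]]
        ring
      rw [hQ, coeff_zero] at h0
      exact hj (pow_eq_zero_iff (n := 2 ^ t) (by positivity) |>.mp h0.symm)
  | succ i =>
      have h0 : (Qpoly m t a).coeff (2 ^ (t + (i.val + 1))) = a i.succ ^ 2 ^ t := by
        rw [Qpoly]
        simp only [coeff_add, finset_sum_coeff, coeff_C_mul, coeff_X_pow]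
        have hi1 : i.val + 1 ≤ t := i.2
        rw [if_neg (by intro h; have := Nat.pow_right_injective (le_refl 2) h; omega)]
        have hz : ∀ k ∈ (Finset.univ : Finset (Fin t)),
            (a k.succ ^ 2 ^ t *
               (if 2 ^ (t + (i.val + 1)) = 2 ^ (t + (k.val + 1)) then (1:GaloisField 2 m) else 0) +
             a k.succ ^ (2 ^ (m - (k.val + 1)) * 2 ^ t) *
               (if 2 ^ (t + (i.val + 1)) = 2 ^ (t - (k.val + 1)) then (1:GaloisField 2 m) else 0)) =
            if k = i then a i.succ ^ 2 ^ t else 0 := by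
          intro k _
          have hk1 : k.val + 1 ≤ t := k.2
          by_cases hk : k = i
          · subst hk
            rw [if_pos rfl, if_pos rfl,
              if_neg (by intro h; have := Nat.pow_right_injective (le_refl 2) h; omega)]
            ring
          · rw [if_neg hk,
              if_neg (by intro h; have := Nat.pow_right_injective (le_refl 2) h
                         exact hk (Fin.ext (by omega))),
              if_neg (by intro h; have := Nat.pow_right_injective (le_refl 2) h; omega)]
            ring
        rw [Finset.sum_congr rfl hz, Finset.sum_ite_eq' Finset.univ i
          (fun _ => a i.succ ^ 2 ^ t)]
        simp
      rw [hQ, coeff_zero] at h0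
      exact hj (pow_eq_zero_iff (n := 2 ^ t) (by positivity) |>.mp h0.symm)

lemma Qpoly_natDegree_le (m t : ℕ) (a : Fin (t + 1) → GaloisField 2 m) :
    (Qpoly m t a).natDegree ≤ 2 ^ (2 * t) := by
  rw [Qpoly]
  apply le_trans (natDegree_add_le _ _)
  apply max_le
  · exact le_trans (natDegree_C_mul_X_pow_le _ _)
      (Nat.pow_le_pow_right (by norm_num) (by omega))
  · apply le_trans (natDegree_sum_le _ _)
    rw [Finset.fold_max_le]
    refine ⟨Nat.zero_le _, fun j _ => ?_⟩
    have hj1 : j.val + 1 ≤ t := j.2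
    apply le_trans (natDegree_add_le _ _)
    apply max_le
    · exact le_trans (natDegree_C_mul_X_pow_le _ _)
        (Nat.pow_le_pow_right (by norm_num) (by omega))
    · exact le_trans (natDegree_C_mul_X_pow_le _ _)
        (Nat.pow_le_pow_right (by norm_num) (by omega))

/-- For `a ≠ 0` and `2t < m`, the linearized polynomial map `L_a` has at most `2^{2t}`
roots in `GF(2^m)`. -/
theorem stmt17 (m t : ℕ) (hm : 1 ≤ m) (ht : 2 * t < m)
    (a : Fin (t + 1) → GaloisField 2 m) (ha : a ≠ 0) :
    @Fintype.card {x : GaloisField 2 m // La m t a x = 0} (Fintype.ofFinite _)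
      ≤ 2 ^ (2 * t) := by
  classical
  have hQ := Qpoly_ne_zero m t hm ht a ha
  set Q := Qpoly m t a with hQdef
  have hmem : ∀ x : GaloisField 2 m, La m t a x = 0 → x ∈ Q.roots.toFinset := by
    intro x hx
    rw [Multiset.mem_toFinset, mem_roots hQ, IsRoot, Qpoly_eval m t hm ht a x, hx]
    simp
  have hinj : Function.Injective
      (fun y : {x : GaloisField 2 m // La m t a x = 0} =>
        (⟨y.1, hmem y.1 y.2⟩ : {x // x ∈ Q.roots.toFinset})) := by
    intro y z h
    exact Subtype.ext (congrArg (fun s : {x // x ∈ Q.roots.toFinset} => s.1) h)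
  calc @Fintype.card {x : GaloisField 2 m // La m t a x = 0} (Fintype.ofFinite _)
      ≤ Fintype.card {x // x ∈ Q.roots.toFinset} :=
        @Fintype.card_le_of_injective _ _ (Fintype.ofFinite _) _ _ hinj
    _ = Q.roots.toFinset.card := Fintype.card_coe _
    _ ≤ Multiset.card Q.roots := Q.roots.toFinset_card_le
    _ ≤ Q.natDegree := Q.card_roots'
    _ ≤ 2 ^ (2 * t) := Qpoly_natDegree_le m t a
end

section
/- Let m ≥ 3 and let E := GaloisField 2 m. Then the number of pairs (a₀, a₁) ∈ E × E such that the map x ↦ a₁·x^2 + a₀·x + a₁^(2^(m−1))·x^(2^(m−1)) has no nonzero root (equivalently, such that the corresponding symmetric bilinear form B_{(a₀,a₁)}(x,y) = Tr(y·(a₁x² + a₀x + a₁^{2^{m−1}}x^{2^{m−1}})) is nonsingular) is at least 4^(m−1): Fintype.card {p : E × E // ∀ x : E, p.2 * x^2 + p.1 * x + p.2 ^ (2^(m−1)) * x ^ (2^(m−1)) = 0 → x = 0} ≥ 4^(m−1). -/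
/-!
Let `q = 2^m`. Squaring gives `x * (a₁² x³ + a₀² x + a₁) = L_a(x)²`, so for `a ≠ 0` the map `L_a`
has at most three nonzero roots. For fixed `x ≠ 0` the pairs `a` with `L_a(x) = 0` form a graph
over `a₁`, and for distinct nonzero `x, y` exactly one `a ≠ 0` vanishes at both. Double counting
then gives, over `a ≠ 0`, `∑ k_a = (q-1)²` and `∑ k_a² = (q-1)(2q-3)` for the number `k_a` of
nonzero roots. Since `3 + k² ≤ 4k` for `1 ≤ k ≤ 3`, at most `(q-1)(2q-1)/3` pairs `a ≠ 0` are
singular, which leaves at least `q²/4` nonsingular pairs.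
-/

open Finset Polynomial

namespace DelsarteGoethals

variable {F : Type*} [Field F] {m : ℕ}

def L (m : ℕ) (a : F × F) (x : F) : F :=
  a.2 * x ^ 2 + a.1 * x + a.2 ^ 2 ^ (m - 1) * x ^ 2 ^ (m - 1)

/-- For `x ≠ 0`, the unique `a` with `a.2 = a₁` and `L m a x = 0` (see `L_eq_zero_iff`). -/
def rootPair (m : ℕ) (x a₁ : F) : F × F :=
  ((a₁ * x ^ 2 + a₁ ^ 2 ^ (m - 1) * x ^ 2 ^ (m - 1)) / x, a₁)

theorem rootPair_injective (x : F) : Function.Injective (rootPair m x) :=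
  fun _ _ h => congrArg Prod.snd h

@[simp]
theorem rootPair_zero (x : F) : rootPair m x 0 = 0 := by
  simp [rootPair]

theorem L_eq_zero_iff [CharP F 2] {x : F} (hx : x ≠ 0) (a : F × F) :
    L m a x = 0 ↔ a = rootPair m x a.2 := by
  rw [L, add_right_comm, CharTwo.add_eq_zero, eq_comm, ← eq_div_iff hx, Prod.ext_iff]
  simp [rootPair]

section SquareRoot

variable [Fintype F] (hF : Fintype.card F = 2 ^ m)
include hF

theorem pow_two_pow_pred_sq (z : F) : (z ^ 2 ^ (m - 1)) ^ 2 = z := by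
  have hm : m ≠ 0 := by
    rintro rfl
    exact (Fintype.one_lt_card (α := F)).ne' hF
  rw [← pow_mul, ← pow_succ, Nat.sub_add_cancel (Nat.one_le_iff_ne_zero.2 hm), ← hF,
    FiniteField.pow_card]

theorem sq_pow_two_pow_pred (z : F) : (z ^ 2) ^ 2 ^ (m - 1) = z := by
  rw [← pow_mul, mul_comm, pow_mul, pow_two_pow_pred_sq hF]

theorem L_sq [CharP F 2] (a : F × F) (x : F) :
    L m a x ^ 2 = a.2 ^ 2 * x ^ 4 + a.1 ^ 2 * x ^ 2 + a.2 * x := by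
  rw [L, CharTwo.add_sq, CharTwo.add_sq, mul_pow, mul_pow, mul_pow, pow_two_pow_pred_sq hF,
    pow_two_pow_pred_sq hF]
  ring

theorem mul_L_add_mul_L [CharP F 2] (a : F × F) (x y : F) :
    y * L m a x + x * L m a y = a.2 ^ 2 ^ (m - 1) * (a.2 ^ 2 ^ (m - 1) * (x * y * (x + y)) +
      (y * x ^ 2 ^ (m - 1) + x * y ^ 2 ^ (m - 1))) := by
  rw [L, L]
  linear_combination -(x ^ 2 * y + x * y ^ 2) * pow_two_pow_pred_sq hF a.2 +
    (a.1 * x * y) * CharTwo.two_eq_zero (R := F)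

theorem ne_zero_and_L_eq_zero_and_L_eq_zero_iff [CharP F 2] {x y : F} (hx : x ≠ 0) (hy : y ≠ 0)
    (hxy : x ≠ y) (b : F × F) :
    b ≠ 0 ∧ L m b x = 0 ∧ L m b y = 0 ↔ b = rootPair m x
      (((y * x ^ 2 ^ (m - 1) + x * y ^ 2 ^ (m - 1)) / (x * y * (x + y))) ^ 2) := by
  set c := x * y * (x + y)
  set d := y * x ^ 2 ^ (m - 1) + x * y ^ 2 ^ (m - 1)
  have hc : c ≠ 0 := mul_ne_zero (mul_ne_zero hx hy) (mt CharTwo.add_eq_zero.1 hxy)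
  have hd : d ≠ 0 := by
    have hdc : d ^ 2 = c := by
      rw [CharTwo.add_sq, mul_pow, mul_pow, pow_two_pow_pred_sq hF, pow_two_pow_pred_sq hF]
      ring
    rintro h
    exact hc (by rw [← hdc, h, zero_pow two_ne_zero])
  -- with `e` the square root of `b.2`, eliminating `b.1` leaves `e * (e * c + d) = 0`
  have elim : ∀ b : F × F, L m b x = 0 →
      (L m b y = 0 ↔ b.2 ^ 2 ^ (m - 1) * (b.2 ^ 2 ^ (m - 1) * c + d) = 0) := by
    intro b hbx
    rw [← mul_L_add_mul_L hF, hbx, mul_zero, zero_add, mul_eq_zero, or_iff_right hx]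
  constructor
  · rintro ⟨hb0, hbx, hby⟩
    have hb : b = rootPair m x b.2 := (L_eq_zero_iff hx b).1 hbx
    rw [elim b hbx, mul_eq_zero, CharTwo.add_eq_zero, ← eq_div_iff hc] at hby
    rcases hby with he | he
    · refine absurd ?_ hb0
      rw [hb, ← pow_two_pow_pred_sq hF b.2, he, zero_pow two_ne_zero, rootPair_zero]
    · rw [hb, ← pow_two_pow_pred_sq hF b.2, he]
  · rintro rfl
    have hbx : L m (rootPair m x ((d / c) ^ 2)) x = 0 := (L_eq_zero_iff hx _).2 rfl
    refine ⟨?_, hbx, ?_⟩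
    · intro h
      exact div_ne_zero hd hc (pow_eq_zero_iff two_ne_zero |>.1 (congrArg Prod.snd h))
    · rw [elim _ hbx]
      simp only [rootPair, sq_pow_two_pow_pred hF, div_mul_cancel₀ d hc,
        CharTwo.add_self_eq_zero, mul_zero]

end SquareRoot

def nonzeroRoots [Fintype F] [DecidableEq F] (m : ℕ) (a : F × F) : Finset F :=
  {x ∈ univ.erase 0 | L m a x = 0}

theorem card_nonzeroRoots_le_three [Fintype F] [DecidableEq F] [CharP F 2]
    (hF : Fintype.card F = 2 ^ m) {a : F × F} (ha : a ≠ 0) : #(nonzeroRoots m a) ≤ 3 := by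
  set P : F[X] := C (a.2 ^ 2) * X ^ 3 + C (a.1 ^ 2) * X + C a.2
  have hP : P ≠ 0 := by
    intro h
    have h0 : P.coeff 0 = 0 := by rw [h, coeff_zero]
    have h1 : P.coeff 1 = 0 := by rw [h, coeff_zero]
    simp only [P, coeff_add, coeff_C_mul, coeff_X_pow, coeff_X, coeff_C] at h0 h1
    norm_num at h0 h1
    exact ha (Prod.ext h1 h0)
  have hroots : (nonzeroRoots m a).val ⊆ P.roots := by
    intro x hx
    simp only [nonzeroRoots, mem_val, mem_filter, mem_erase, mem_univ, and_true] at hx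
    rw [mem_roots hP, IsRoot, ← mul_eq_zero_iff_left hx.1]
    calc x * P.eval x = L m a x ^ 2 := by simp [P, L_sq hF]; ring
      _ = 0 := by rw [hx.2, zero_pow two_ne_zero]
  calc #(nonzeroRoots m a) ≤ P.natDegree := card_le_degree_of_subset_roots hroots
    _ ≤ 3 := by unfold P; compute_degree

section Counting

variable [Fintype F] [DecidableEq F] [CharP F 2]

theorem card_filter_L_eq_zero {x : F} (hx : x ≠ 0) :
    #{a ∈ (univ : Finset (F × F)).erase 0 | L m a x = 0} = Fintype.card F - 1 := by
  have hgraph : {a ∈ (univ : Finset (F × F)) | L m a x = 0} = univ.image (rootPair m x) := by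
    ext a
    simp only [mem_filter, mem_univ, true_and, mem_image, L_eq_zero_iff hx]
    exact ⟨fun h => ⟨a.2, h.symm⟩, by rintro ⟨b, rfl⟩; rfl⟩
  rw [filter_erase, hgraph, card_erase_of_mem (mem_image.2 ⟨0, mem_univ _, rootPair_zero x⟩),
    card_image_of_injective _ (rootPair_injective x), card_univ]

theorem card_filter_L_eq_zero_and_L_eq_zero (hF : Fintype.card F = 2 ^ m) {x y : F}
    (hx : x ≠ 0) (hy : y ≠ 0) (hxy : x ≠ y) :
    #{a ∈ (univ : Finset (F × F)).erase 0 | L m a x = 0 ∧ L m a y = 0} = 1 :=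
  card_eq_one.2 ⟨_, by
    ext b
    simp only [mem_filter, mem_erase, mem_univ, and_true, mem_singleton]
    exact ne_zero_and_L_eq_zero_and_L_eq_zero_iff hF hx hy hxy b⟩

theorem sum_card_nonzeroRoots :
    ∑ a ∈ (univ : Finset (F × F)).erase 0, #(nonzeroRoots m a) =
      (Fintype.card F - 1) * (Fintype.card F - 1) := by
  refine (sum_card_bipartiteAbove_eq_sum_card_bipartiteBelow fun a x => L m a x = 0).trans ?_
  simp only [bipartiteBelow]
  rw [sum_congr rfl fun x hx => card_filter_L_eq_zero (ne_of_mem_erase hx), sum_const,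
    card_erase_of_mem (mem_univ _), card_univ, smul_eq_mul]

theorem sum_card_nonzeroRoots_sq (hF : Fintype.card F = 2 ^ m) :
    ∑ a ∈ (univ : Finset (F × F)).erase 0, #(nonzeroRoots m a) ^ 2 =
      (Fintype.card F - 1) * (Fintype.card F - 1 + (Fintype.card F - 2)) := by
  set X : Finset F := univ.erase 0
  have hsq : ∀ a : F × F, #(nonzeroRoots m a) ^ 2 =
      #((X ×ˢ X).bipartiteAbove (fun a p => L m a p.1 = 0 ∧ L m a p.2 = 0) a) := by
    intro a
    rw [sq, ← card_product, bipartiteAbove, nonzeroRoots, ← filter_product]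
  have hrow : ∀ x ∈ X,
      ∑ y ∈ X, #{a ∈ (univ : Finset (F × F)).erase 0 | L m a x = 0 ∧ L m a y = 0} =
        Fintype.card F - 1 + (Fintype.card F - 2) := by
    intro x hx
    rw [← add_sum_erase X _ hx]
    simp only [and_self]
    rw [card_filter_L_eq_zero (ne_of_mem_erase hx),
      sum_congr rfl fun y hy => card_filter_L_eq_zero_and_L_eq_zero hF (ne_of_mem_erase hx)
        (ne_of_mem_erase (mem_of_mem_erase hy)) (ne_of_mem_erase hy).symm,
      sum_const, card_erase_of_mem hx, card_erase_of_mem (mem_univ _), card_univ, smul_eq_mul,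
      mul_one, Nat.sub_sub]
  rw [sum_congr rfl fun a _ => hsq a, sum_card_bipartiteAbove_eq_sum_card_bipartiteBelow,
    sum_product]
  simp only [bipartiteBelow]
  rw [sum_congr rfl hrow, sum_const, card_erase_of_mem (mem_univ _), card_univ,
    smul_eq_mul]

theorem three_mul_card_add_sum_card_nonzeroRoots_sq_le (hF : Fintype.card F = 2 ^ m) :
    3 * #{a ∈ (univ : Finset (F × F)).erase 0 | (nonzeroRoots m a).Nonempty} +
        ∑ a ∈ (univ : Finset (F × F)).erase 0, #(nonzeroRoots m a) ^ 2 ≤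
      4 * ∑ a ∈ (univ : Finset (F × F)).erase 0, #(nonzeroRoots m a) := by
  rw [card_filter, mul_sum, mul_sum, ← sum_add_distrib]
  refine sum_le_sum fun a ha => ?_
  have hle := card_nonzeroRoots_le_three hF (ne_of_mem_erase ha)
  split_ifs with hne
  · have hpos := hne.card_pos
    interval_cases #(nonzeroRoots m a) <;> omega
  · simp [not_nonempty_iff_eq_empty.1 hne]

omit [CharP F 2] in
theorem sq_card_le_card_add_card_add_one :
    Fintype.card F ^ 2 ≤ #{a : F × F | ∀ x, L m a x = 0 → x = 0} +
      #{a ∈ (univ : Finset (F × F)).erase 0 | (nonzeroRoots m a).Nonempty} + 1 := by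
  have hcover : univ ⊆ ({a | ∀ x, L m a x = 0 → x = 0} : Finset (F × F)) ∪
      {a ∈ (univ : Finset (F × F)).erase 0 | (nonzeroRoots m a).Nonempty} ∪ {0} := by
    intro a _
    by_cases ha : a = 0
    · simp [ha]
    by_cases hroot : (nonzeroRoots m a).Nonempty
    · simp [ha, hroot]
    refine mem_union_left _ (mem_union_left _ (mem_filter.2 ⟨mem_univ _, fun x hx => ?_⟩))
    by_contra hx0
    exact hroot ⟨x, mem_filter.2 ⟨mem_erase.2 ⟨hx0, mem_univ _⟩, hx⟩⟩
  calc Fintype.card F ^ 2 = #(univ : Finset (F × F)) := by rw [card_univ, Fintype.card_prod, sq]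
    _ ≤ _ := card_le_card hcover
    _ ≤ _ := (card_union_le _ _).trans (Nat.add_le_add_right (card_union_le _ _) _)
    _ = _ := by rw [card_singleton]

theorem sq_card_le_four_mul_card_nonsingular (hF : Fintype.card F = 2 ^ m) :
    Fintype.card F ^ 2 ≤ 4 * #{a : F × F | ∀ x, L m a x = 0 → x = 0} := by
  have hcover := sq_card_le_card_add_card_add_one (m := m) (F := F)
  have hsums := three_mul_card_add_sum_card_nonzeroRoots_sq_le hF
  rw [sum_card_nonzeroRoots, sum_card_nonzeroRoots_sq hF] at hsums
  obtain ⟨k, hk⟩ : ∃ k, Fintype.card F = k + 2 :=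
    ⟨Fintype.card F - 2, (Nat.sub_add_cancel Fintype.one_lt_card).symm⟩
  rw [hk] at hcover hsums ⊢
  simp only [Nat.add_sub_cancel, Nat.add_succ_sub_one] at hsums
  nlinarith

end Counting

end DelsarteGoethals

open DelsarteGoethals in
/-- The number of pairs `(a₀, a₁) ∈ GF(2^m)²` for which the linearized polynomial
`L_{(a₀,a₁)}(x) = a₁ x² + a₀ x + a₁^{2^{m-1}} x^{2^{m-1}}` has no nonzero root (i.e. the
corresponding symmetric bilinear form `Tr(y·L_{(a₀,a₁)}(x))` is nonsingular) is at least
`4^{m-1}`. -/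
theorem stmt18 (m : ℕ) (hm : 3 ≤ m) :
    4 ^ (m - 1) ≤
      @Fintype.card
        {p : GaloisField 2 m × GaloisField 2 m //
          ∀ x : GaloisField 2 m,
            p.2 * x ^ 2 + p.1 * x + p.2 ^ (2 ^ (m - 1)) * x ^ (2 ^ (m - 1)) = 0 → x = 0}
        (Fintype.ofFinite _) := by
  classical
  let : Fintype (GaloisField 2 m) := Fintype.ofFinite _
  have hF : Fintype.card (GaloisField 2 m) = 2 ^ m := by
    rw [Fintype.card_eq_nat_card]
    exact GaloisField.card 2 m (by omega)
  have h4 : 4 ^ (m - 1) * 4 = (2 ^ m) ^ 2 := by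
    rw [← pow_succ, Nat.sub_add_cancel (by omega), ← pow_mul, mul_comm, pow_mul]
    rfl
  have hcount := sq_card_le_four_mul_card_nonsingular (m := m) hF
  rw [hF, ← h4] at hcount
  rw [Fintype.card_subtype]
  convert (by omega : 4 ^ (m - 1) ≤
    #{a : GaloisField 2 m × GaloisField 2 m | ∀ x, L m a x = 0 → x = 0})
  rfl
end

section
/- Let m ≥ 3 and let E := GaloisField 2 m. Then the number of pairs (a₀, a₁) ∈ E × E such that the map x ↦ a₁·x^2 + a₀·x + a₁^(2^(m−1))·x^(2^(m−1)) has no nonzero root equals exactly 2^m − 1 + (2^m + 1)·(2^m − 1)/3, i.e. Fintype.card {p : E × E // ∀ x : E, p.2 * x^2 + p.1 * x + p.2 ^ (2^(m−1)) * x ^ (2^(m−1)) = 0 → x = 0} = 2^m − 1 + (4^m − 1)/3 (the division being exact since 3 divides 4^m − 1). -/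
/-!
In characteristic 2 squaring is additive, and with `y ↦ y ^ e` the square root,
`L_a(x)² = x (a₁² x³ + a₀² x + a₁)`. So `L_a` has no nonzero root iff either `a₁ = 0 ≠ a₀`
(`q - 1` pairs, `q = |K|`), or `a₁ ≠ 0` and the depressed cubic `X³ + c X + d` with
`(c, d) = ((a₀ / a₁)², a₁⁻¹)` has no root; this reparametrization is a bijection onto
the rootless depressed cubics, all of which have `d ≠ 0`.

The number `Z` of rootless depressed cubics comes from the factorial moments of the number
`N ≤ 3` of distinct roots: every `x` is a root of `q` of them, and every ordered pair `x ≠ y`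
of roots determines the cubic `(X - x)(X - y)(X + x + y)`, whose third root `x + y` differs
from `x` and `y` iff `x, y ≠ 0`. Summing `6·[N = 0] = 6 - 6N + 3N(N-1) - N(N-1)(N-2)` over all
`q²` cubics gives `6Z = 6q² - 6q² + 3q(q-1) - (q-1)(q-2)`, i.e. `3Z = q² - 1`.
-/

open Finset

namespace DepressedCubic

section Field

variable {K : Type*} [Field K]

def roots [Fintype K] [DecidableEq K] (p : K × K) : Finset K :=
  {x | x ^ 3 + p.1 * x + p.2 = 0}

@[simp]
theorem mem_roots [Fintype K] [DecidableEq K] {p : K × K} {x : K} :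
    x ∈ roots p ↔ x ^ 3 + p.1 * x + p.2 = 0 := by
  simp [roots]

def ofRoots (x y : K) : K × K :=
  (-(x ^ 2 + x * y + y ^ 2), x * y * (x + y))

theorem ofRoots_eval (x y z : K) :
    z ^ 3 + (ofRoots x y).1 * z + (ofRoots x y).2 = (z - x) * (z - y) * (z + x + y) := by
  simp only [ofRoots]
  ring

variable [Fintype K] [DecidableEq K]

theorem roots_ofRoots (x y : K) : roots (ofRoots x y) = {x, y, -(x + y)} := by
  ext z
  rw [mem_roots, ofRoots_eval, add_assoc, mul_eq_zero, mul_eq_zero, add_eq_zero_iff_eq_neg]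
  simp only [sub_eq_zero, mem_insert, mem_singleton, or_assoc]

theorem eq_ofRoots {p : K × K} {x y : K} (hxy : x ≠ y) (hx : x ∈ roots p) (hy : y ∈ roots p) :
    p = ofRoots x y := by
  rw [mem_roots] at hx hy
  have hc : p.1 = -(x ^ 2 + x * y + y ^ 2) := by
    refine mul_left_cancel₀ (sub_ne_zero.mpr hxy) ?_
    linear_combination hx - hy
  have hd : p.2 = x * y * (x + y) := by
    linear_combination hx - x * hc
  exact Prod.ext hc hd

theorem mem_offDiag_roots {p xy : K × K} :
    xy ∈ (roots p).offDiag ↔ xy.1 ≠ xy.2 ∧ p = ofRoots xy.1 xy.2 := by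
  constructor
  · rintro hxy
    obtain ⟨hx, hy, hne⟩ := mem_offDiag.mp hxy
    exact ⟨hne, eq_ofRoots hne hx hy⟩
  · rintro ⟨hne, rfl⟩
    simp [roots_ofRoots, hne]

theorem card_roots_le_three (p : K × K) : #(roots p) ≤ 3 := by
  let P : Polynomial K := .X ^ 3 + .C p.1 * .X + .C p.2
  have hP : P.natDegree = 3 := by simp only [P]; compute_degree!
  have hP0 : P ≠ 0 := Polynomial.ne_zero_of_natDegree_gt (n := 0) (by omega)
  calc #(roots p) ≤ #P.roots.toFinset := card_le_card fun x hx => by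
          simpa [P, Polynomial.mem_roots hP0] using hx
    _ ≤ P.natDegree := (Multiset.toFinset_card_le _).trans (Polynomial.card_roots' P)
    _ = 3 := hP

theorem sum_card_roots : ∑ p : K × K, #(roots p) = Fintype.card K ^ 2 := by
  rw [Fintype.sum_prod_type, sq, ← card_univ, ← smul_eq_mul, ← sum_const]
  refine sum_congr rfl fun c _ => ?_
  rw [card_eq_sum_card_fiberwise (f := fun x => -(x ^ 3 + c * x)) (t := univ) fun _ _ => mem_univ _]
  simp only [roots, neg_eq_iff_add_eq_zero]

theorem sum_sum_offDiag_roots {M : Type*} [AddCommMonoid M] (f : K × K → K × K → M) :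
    ∑ p : K × K, ∑ xy ∈ (roots p).offDiag, f p xy
      = ∑ xy ∈ (univ : Finset K).offDiag, f (ofRoots xy.1 xy.2) xy := by
  rw [sum_comm' (t' := univ.offDiag) (s' := fun xy => {ofRoots xy.1 xy.2})]
  · simp only [sum_singleton]
  · intro p xy
    rw [mem_offDiag_roots]
    simp only [mem_univ, true_and, mem_singleton, mem_offDiag]
    exact and_comm

theorem sum_card_roots_mul_sub_one :
    ∑ p : K × K, #(roots p) * (#(roots p) - 1) = Fintype.card K * (Fintype.card K - 1) := by
  have h := sum_sum_offDiag_roots (K := K) fun _ _ => 1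
  simpa only [sum_const, smul_eq_mul, mul_one, offDiag_card, card_univ, ← Nat.mul_sub_one] using h

theorem card_filter_roots_div_sq {e : ℕ} (he : ∀ y : K, (y ^ e) ^ 2 = y) :
    #{a : K × K | a.2 ≠ 0 ∧ roots ((a.1 / a.2) ^ 2, a.2⁻¹) = ∅}
      = #{p : K × K | roots p = ∅} := by
  have he' : ∀ y : K, (y ^ 2) ^ e = y := fun y => by rw [← pow_mul, mul_comm, pow_mul, he]
  have hd : ∀ {p : K × K}, roots p = ∅ → p.2 ≠ 0 := fun hp h0 => by
    simpa [h0] using eq_empty_iff_forall_notMem.mp hp 0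
  have hsq : ∀ {p : K × K}, p.2 ≠ 0 → ((p.1 ^ e / p.2) / p.2⁻¹) ^ 2 = p.1 := fun h0 => by
    rw [div_inv_eq_mul, div_mul_cancel₀ _ h0, he]
  refine card_nbij' (fun a => ((a.1 / a.2) ^ 2, a.2⁻¹)) (fun p => (p.1 ^ e / p.2, p.2⁻¹))
    ?_ ?_ ?_ ?_ <;> intro p hp <;> simp only [coe_filter, Set.mem_ofPred_eq, mem_univ, true_and]
      at hp ⊢
  · exact hp.2
  · rw [hsq (hd hp), inv_inv]
    exact ⟨inv_ne_zero (hd hp), hp⟩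
  · rw [he', div_inv_eq_mul, div_mul_cancel₀ _ hp.1, inv_inv]
  · rw [hsq (hd hp), inv_inv]

variable [CharP K 2]

theorem card_roots_ofRoots {x y : K} (hxy : x ≠ y) :
    #(roots (ofRoots x y)) = 2 + if x ≠ 0 ∧ y ≠ 0 then 1 else 0 := by
  rw [roots_ofRoots, CharTwo.neg_eq]
  by_cases hx : x = 0
  · subst hx
    simp [hxy]
  by_cases hy : y = 0
  · subst hy
    simp [hxy, card_pair (Ne.symm hxy)]
  have hy' : y ≠ x + y := fun h => hx (by simpa using h.symm)
  have hx' : x ≠ x + y := fun h => hy (by simpa using h.symm)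
  rw [card_insert_of_notMem (by simp [hxy, hx']), card_pair hy']
  simp [hx, hy]

theorem sum_card_roots_mul_sub_one_mul_sub_two :
    ∑ p : K × K, #(roots p) * (#(roots p) - 1) * (#(roots p) - 2)
      = (Fintype.card K - 1) * (Fintype.card K - 2) := by
  have h := sum_sum_offDiag_roots (K := K) fun p _ => #(roots p) - 2
  simp only [sum_const, smul_eq_mul, offDiag_card, ← Nat.mul_sub_one] at h
  rw [h]
  calc ∑ xy ∈ (univ : Finset K).offDiag, (#(roots (ofRoots xy.1 xy.2)) - 2)
      = ∑ xy ∈ (univ : Finset K).offDiag, if xy.1 ≠ 0 ∧ xy.2 ≠ 0 then 1 else 0 :=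
        sum_congr rfl fun xy hxy => by
          rw [card_roots_ofRoots (mem_offDiag.mp hxy).2.2, Nat.add_sub_cancel_left]
    _ = #((univ.erase (0 : K)).offDiag) := by
      rw [sum_boole, Nat.cast_id]
      congr 1
      ext xy
      simp only [mem_filter, mem_offDiag, mem_univ, mem_erase]
      tauto
    _ = (Fintype.card K - 1) * (Fintype.card K - 2) := by
      rw [offDiag_card, card_erase_of_mem (mem_univ _), card_univ, ← Nat.mul_sub_one, Nat.sub_sub]

theorem three_mul_card_filter_roots_eq_empty :
    3 * #{p : K × K | roots p = ∅} = Fintype.card K ^ 2 - 1 := by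
  have hpoint : ∀ n ≤ 3,
      6 * (if n = 0 then 1 else 0) + 6 * n + n * (n - 1) * (n - 2) = 6 + 3 * (n * (n - 1)) := by
    intro n hn
    interval_cases n <;> rfl
  have hsum := sum_congr rfl fun p (_ : p ∈ (univ : Finset (K × K))) =>
    hpoint _ (card_roots_le_three p)
  simp only [sum_add_distrib, ← mul_sum, sum_boole, card_eq_zero, sum_card_roots,
    sum_card_roots_mul_sub_one, sum_card_roots_mul_sub_one_mul_sub_two, sum_const, card_univ,
    Fintype.card_prod, smul_eq_mul, Nat.cast_id] at hsum
  obtain ⟨r, hr⟩ : ∃ r, Fintype.card K = r + 2 := ⟨Fintype.card K - 2, by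
    have := Fintype.one_lt_card (α := K)
    omega⟩
  rw [hr] at hsum ⊢
  simp only [Nat.add_sub_cancel, show r + 2 - 1 = r + 1 by omega] at hsum
  ring_nf at hsum ⊢
  omega

end Field

end DepressedCubic

section Linearized

variable {K : Type*} [Field K] {e : ℕ}

def linearizedMap (e : ℕ) (a : K × K) (x : K) : K :=
  a.2 * x ^ 2 + a.1 * x + a.2 ^ e * x ^ e

theorem linearizedMap_sq [CharP K 2] (he : ∀ y : K, (y ^ e) ^ 2 = y) (a : K × K) (x : K) :
    linearizedMap e a x ^ 2 = x * (a.2 ^ 2 * x ^ 3 + a.1 ^ 2 * x + a.2) := by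
  simp only [linearizedMap, add_pow_char, mul_pow, he]
  ring

theorem linearizedMap_eq_zero_iff [CharP K 2] (he : ∀ y : K, (y ^ e) ^ 2 = y)
    {a : K × K} {x : K} :
    linearizedMap e a x = 0 ↔ x = 0 ∨ a.2 ^ 2 * x ^ 3 + a.1 ^ 2 * x + a.2 = 0 := by
  rw [← pow_eq_zero_iff two_ne_zero, linearizedMap_sq he, mul_eq_zero]

variable [Fintype K] [DecidableEq K] [CharP K 2]

theorem forall_linearizedMap_eq_zero_iff (he : ∀ y : K, (y ^ e) ^ 2 = y) (a : K × K) :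
    (∀ x, linearizedMap e a x = 0 → x = 0) ↔
      (a.2 = 0 ∧ a.1 ≠ 0) ∨ (a.2 ≠ 0 ∧ DepressedCubic.roots ((a.1 / a.2) ^ 2, a.2⁻¹) = ∅) := by
  simp_rw [linearizedMap_eq_zero_iff he, or_imp, imp_self, true_and]
  rcases eq_or_ne a.2 0 with h2 | h2
  · simp only [h2, ne_eq, not_true_eq_false, false_and, or_false, true_and, OfNat.ofNat_ne_zero,
      not_false_eq_true, zero_pow, zero_mul, zero_add, add_zero, mul_eq_zero, pow_eq_zero_iff]
    exact ⟨fun h h1 => one_ne_zero (h 1 (.inl h1)), fun h x hx => hx.resolve_left h⟩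
  · have hfactor : ∀ x : K, a.2 ^ 2 * x ^ 3 + a.1 ^ 2 * x + a.2
        = a.2 ^ 2 * (x ^ 3 + (a.1 / a.2) ^ 2 * x + a.2⁻¹) := by
      intro x
      field_simp
    simp only [h2, hfactor, mul_eq_zero, pow_eq_zero_iff, ne_eq, OfNat.ofNat_ne_zero, false_or,
      eq_empty_iff_forall_notMem, DepressedCubic.mem_roots, not_false_eq_true, true_and, false_and]
    refine ⟨fun h x hx => ?_, fun h x hx => absurd hx (h x)⟩
    obtain rfl := h x hx
    simp [h2] at hx

theorem card_filter_forall_linearizedMap_eq_zero (he : ∀ y : K, (y ^ e) ^ 2 = y) :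
    #{a : K × K | ∀ x, linearizedMap e a x = 0 → x = 0}
      = (Fintype.card K - 1) + #{p : K × K | DepressedCubic.roots p = ∅} := by
  rw [filter_congr fun a _ => forall_linearizedMap_eq_zero_iff he a, filter_or,
    card_union_of_disjoint (disjoint_filter.mpr fun a _ h h' => h'.1 h.1),
    DepressedCubic.card_filter_roots_div_sq he]
  congr 1
  have : ({a : K × K | a.2 = 0 ∧ a.1 ≠ 0} : Finset (K × K)) = (univ.erase 0) ×ˢ {0} := by
    ext a
    simp only [mem_filter, mem_univ, true_and, mem_product, mem_erase, mem_singleton, and_comm]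
  rw [this, card_product, card_singleton, mul_one, card_erase_of_mem (mem_univ _), card_univ]

end Linearized

/-- The number of pairs `(a₀, a₁) ∈ GF(2^m)²` for which the linearized polynomial
`L_{(a₀,a₁)}(x) = a₁ x² + a₀ x + a₁^{2^{m-1}} x^{2^{m-1}}` has no nonzero root equals
exactly `2^m - 1 + (4^m - 1)/3`. -/
theorem stmt19 (m : ℕ) (hm : 3 ≤ m) :
    @Fintype.card
        {p : GaloisField 2 m × GaloisField 2 m //
          ∀ x : GaloisField 2 m,
            p.2 * x ^ 2 + p.1 * x + p.2 ^ (2 ^ (m - 1)) * x ^ (2 ^ (m - 1)) = 0 → x = 0}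
        (Fintype.ofFinite _)
      = 2 ^ m - 1 + (4 ^ m - 1) / 3 := by
  classical
  let _ : Fintype (GaloisField 2 m) := Fintype.ofFinite _
  have hq : Fintype.card (GaloisField 2 m) = 2 ^ m := by
    rw [Fintype.card_eq_nat_card, GaloisField.card 2 m (by omega)]
  have he : ∀ y : GaloisField 2 m, (y ^ 2 ^ (m - 1)) ^ 2 = y := fun y => by
    rw [← pow_mul, ← pow_succ, Nat.sub_add_cancel (by omega : 1 ≤ m), ← hq, FiniteField.pow_card]
  have hZ := DepressedCubic.three_mul_card_filter_roots_eq_empty (K := GaloisField 2 m)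
  rw [Fintype.card_subtype]
  refine (card_filter_forall_linearizedMap_eq_zero he).trans ?_
  have h4 : (2 ^ m) ^ 2 = 4 ^ m := by rw [← pow_mul, mul_comm, pow_mul]; norm_num
  rw [hq, h4] at hZ
  rw [hq]
  omega
end
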